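/- arXiv:1105.2417 — 6 statements merged into one kernel-verified Lean document; each statement's English description precedes it below -/
import Mathlib

section
/- Let 0 < θ < ε ≤ 1 and let N be a natural number with N ≥ 1/(ε² − θ²). If A₀, …, A_{N−1} are measurable events in a probability space (Ω, Σ, μ) satisfying μ(A_i) ≥ ε for every i ∈ {0, …, N−1}, then there exist i, j ∈ {0, …, N−1} with i ≠ j such that μ(A_i ∩ A_j) ≥ θ². -/
/-!
Let `X = ∑ i, 1_{A i}`. Then `E[X] ≥ εN`, and `E[X²] = ∑ i, ∑ j, μ(A i ∩ A j)` is at least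
`E[X]² ≥ ε²N²` because the variance of `X` is nonnegative. If every off-diagonal term were
below `θ²`, each row of the double sum would be at most `1 + (N - 1)θ²`, giving
`ε²N² ≤ N(1 + (N - 1)θ²)`, i.e. `N(ε² - θ²) ≤ 1 - θ² < 1`, against the choice of `N`.
-/

open MeasureTheory ProbabilityTheory Finset

section

variable {Ω ι : Type*} [MeasurableSpace Ω] {μ : Measure Ω} {A : ι → Set Ω} {s : Finset ι}

lemma integral_sq_sum_indicator_one [IsFiniteMeasure μ] (hA : ∀ i ∈ s, MeasurableSet (A i)) :
    ∫ ω, (∑ i ∈ s, (A i).indicator 1 ω) ^ 2 ∂μ = ∑ i ∈ s, ∑ j ∈ s, μ.real (A i ∩ A j) := by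
  have hint : ∀ i ∈ s, ∀ j ∈ s, Integrable ((A i ∩ A j).indicator (1 : Ω → ℝ)) μ :=
    fun i hi j hj => (integrable_const 1).indicator ((hA i hi).inter (hA j hj))
  have hsq : ∀ ω, (∑ i ∈ s, (A i).indicator 1 ω) ^ 2
      = ∑ i ∈ s, ∑ j ∈ s, (A i ∩ A j).indicator (1 : Ω → ℝ) ω := fun ω => by
    simp only [sq, sum_mul_sum, Set.inter_indicator_one, Pi.mul_apply]
  rw [funext hsq, integral_finsetSum _ fun i hi => integrable_finsetSum _ (hint i hi)]
  refine sum_congr rfl fun i hi => ?_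
  rw [integral_finsetSum _ (hint i hi)]
  exact sum_congr rfl fun j hj => integral_indicator_one ((hA i hi).inter (hA j hj))

lemma sq_sum_measureReal_le_sum_sum_measureReal_inter [IsProbabilityMeasure μ]
    (hA : ∀ i ∈ s, MeasurableSet (A i)) :
    (∑ i ∈ s, μ.real (A i)) ^ 2 ≤ ∑ i ∈ s, ∑ j ∈ s, μ.real (A i ∩ A j) := by
  set X : Ω → ℝ := ∑ i ∈ s, (A i).indicator 1
  have hX : MemLp X 2 μ :=
    memLp_finsetSum' s fun i hi => memLp_indicator_const 2 (hA i hi) 1 (.inr (measure_ne_top μ _))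
  have hmean : ∫ ω, X ω ∂μ = ∑ i ∈ s, μ.real (A i) := by
    simp only [X, Finset.sum_apply]
    rw [integral_finsetSum _ fun i hi => (integrable_const 1).indicator (hA i hi)]
    exact sum_congr rfl fun i hi => integral_indicator_one (hA i hi)
  have hsecond : ∫ ω, (X ^ 2) ω ∂μ = ∑ i ∈ s, ∑ j ∈ s, μ.real (A i ∩ A j) := by
    simpa only [X, Pi.pow_apply, Finset.sum_apply] using integral_sq_sum_indicator_one hA
  have hvar := variance_nonneg X μ
  rw [variance_eq_sub hX, hmean, hsecond] at hvar
  linarith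

lemma sum_measureReal_inter_le [IsZeroOrProbabilityMeasure μ] {i : ι} (hi : i ∈ s) {c : ℝ}
    (hc : ∀ j ∈ s, j ≠ i → μ.real (A i ∩ A j) ≤ c) :
    ∑ j ∈ s, μ.real (A i ∩ A j) ≤ 1 + (#s - 1) * c := by
  classical
  rw [← add_sum_erase s _ hi, ← cast_card_erase_of_mem hi, ← nsmul_eq_mul]
  gcongr
  · exact measureReal_le_one
  · exact sum_le_card_nsmul _ _ _ fun j hj => hc j (mem_of_mem_erase hj) (ne_of_mem_erase hj)

end

theorem stmt0_general {Ω : Type*} [MeasurableSpace Ω] (μ : Measure Ω) [IsProbabilityMeasure μ]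
    (θ ε : ℝ) (hθ : 0 < θ) (hθε : θ < ε)
    (N : ℕ) (hN : 1 / (ε ^ 2 - θ ^ 2) ≤ (N : ℝ))
    (A : ℕ → Set Ω) (hmeas : ∀ i < N, MeasurableSet (A i))
    (hA : ∀ i < N, ε ≤ (μ (A i)).toReal) :
    ∃ i < N, ∃ j < N, i ≠ j ∧ θ ^ 2 ≤ (μ (A i ∩ A j)).toReal := by
  by_contra! hsmall
  have hgap : 0 < ε ^ 2 - θ ^ 2 := by nlinarith
  have hN' : 1 ≤ N * (ε ^ 2 - θ ^ 2) := (div_le_iff₀ hgap).mp hN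
  have hNpos : (0 : ℝ) < N := by nlinarith
  have hmean : N * ε ≤ ∑ i ∈ range N, μ.real (A i) := by
    simpa using card_nsmul_le_sum (range N) (fun i => μ.real (A i)) ε
      fun i hi => hA i (mem_range.mp hi)
  have hrows : ∑ i ∈ range N, ∑ j ∈ range N, μ.real (A i ∩ A j) ≤ N * (1 + (N - 1) * θ ^ 2) := by
    simpa only [card_range, nsmul_eq_mul] using sum_le_card_nsmul (range N) _ _ fun i hi =>
      sum_measureReal_inter_le hi fun j hj hji =>
        (hsmall i (mem_range.mp hi) j (mem_range.mp hj) hji.symm).le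
  have hsecond : (N * ε) ^ 2 ≤ N * (1 + (N - 1) * θ ^ 2) :=
    (pow_le_pow_left₀ (by nlinarith) hmean 2).trans
      ((sq_sum_measureReal_le_sum_sum_measureReal_inter
        fun i hi => hmeas i (mem_range.mp hi)).trans hrows)
  nlinarith [mul_le_mul_of_nonneg_left hN' hNpos.le, mul_pos hNpos (pow_pos hθ 2)]

theorem stmt0 {Ω : Type*} [MeasurableSpace Ω] (μ : Measure Ω) [IsProbabilityMeasure μ]
    (θ ε : ℝ) (hθ : 0 < θ) (hθε : θ < ε) (hε : ε ≤ 1)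
    (N : ℕ) (hN : 1 / (ε ^ 2 - θ ^ 2) ≤ (N : ℝ))
    (A : ℕ → Set Ω) (hmeas : ∀ i < N, MeasurableSet (A i))
    (hA : ∀ i < N, ε ≤ (μ (A i)).toReal) :
    ∃ i < N, ∃ j < N, i ≠ j ∧ θ ^ 2 ≤ (μ (A i ∩ A j)).toReal :=
  stmt0_general μ θ ε hθ hθε N hN A hmeas hA
end

section
/- Let 0 < θ < ε, let α ≥ 1, let (δ_n) be a sequence in (0,1) with ∏_{n∈ℕ}(1 − δ_n) ≥ θ/ε, and define ε₀ = ε, ε_{k+1} = (ε_k(1 − δ_k))^α. Then for every k ≥ 1, ∏_{i=0}^{k} ε_i ≥ θ^{Σ_{j=0}^{k} α^j}. -/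
open Finset

theorem stmt5 (θ ε α : ℝ) (hθ : 0 < θ) (hθε : θ < ε) (hα : 1 ≤ α)
    (δ : ℕ → ℝ) (hδ : ∀ n, δ n ∈ Set.Ioo (0 : ℝ) 1)
    (hprod : ∃ P : ℝ, HasProd (fun n => 1 - δ n) P ∧ θ / ε ≤ P)
    (e : ℕ → ℝ) (he0 : e 0 = ε) (hrec : ∀ k, e (k + 1) = (e k * (1 - δ k)) ^ α) :
    ∀ k, 1 ≤ k →
      θ ^ (∑ j ∈ Finset.range (k + 1), α ^ j) ≤ ∏ i ∈ Finset.range (k + 1), e i := by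
  obtain ⟨P, hP, hPle⟩ := hprod
  have hε : 0 < ε := hθ.trans hθε
  have hα0 : (0:ℝ) < α := lt_of_lt_of_le one_pos hα
  have hf : ∀ i, 0 < 1 - δ i := fun i => by have := (hδ i).2; linarith
  have hf1 : ∀ i, 1 - δ i ≤ 1 := fun i => by have := (hδ i).1; linarith
  -- partial products bounded below by θ/ε
  have hT : Filter.Tendsto (fun s : Finset ℕ => ∏ i ∈ s, (1 - δ i)) Filter.atTop (nhds P) := hP
  have hpart : ∀ k, θ / ε ≤ ∏ i ∈ range k, (1 - δ i) := by
    intro k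
    refine hPle.trans (le_of_tendsto hT ?_)
    filter_upwards [Filter.eventually_ge_atTop (range k)] with s hs
    have h1 : (∏ i ∈ s \ range k, (1 - δ i)) ≤ 1 :=
      Finset.prod_le_one (fun i _ => (hf i).le) (fun i _ => hf1 i)
    calc ∏ i ∈ s, (1 - δ i)
        = (∏ i ∈ s \ range k, (1 - δ i)) * ∏ i ∈ range k, (1 - δ i) :=
          (Finset.prod_sdiff hs).symm
      _ ≤ 1 * ∏ i ∈ range k, (1 - δ i) :=
          mul_le_mul_of_nonneg_right h1 (Finset.prod_nonneg fun i _ => (hf i).le)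
      _ = ∏ i ∈ range k, (1 - δ i) := one_mul _
  have hepos : ∀ k, 0 < e k := by
    intro k
    induction k with
    | zero => rw [he0]; exact hε
    | succ k ih => rw [hrec]; exact Real.rpow_pos_of_pos (mul_pos ih (hf k)) α
  -- pointwise formula
  have hek : ∀ k, e k = ε ^ ((α:ℝ) ^ k) * ∏ i ∈ range k, (1 - δ i) ^ ((α:ℝ) ^ (k - i)) := by
    intro k
    induction k with
    | zero => simp [he0]
    | succ k ih =>
      have hprodnn : (0:ℝ) ≤ ∏ i ∈ range k, (1 - δ i) ^ ((α:ℝ) ^ (k - i)) :=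
        Finset.prod_nonneg fun i _ => Real.rpow_nonneg (hf i).le _
      rw [hrec, ih]
      rw [Real.mul_rpow (mul_nonneg (Real.rpow_nonneg hε.le _) hprodnn) (hf k).le,
          Real.mul_rpow (Real.rpow_nonneg hε.le _) hprodnn,
          ← Real.rpow_mul hε.le, ← pow_succ,
          ← Real.finset_prod_rpow _ _ (fun i _ => Real.rpow_nonneg (hf i).le _) α]
      rw [Finset.prod_range_succ]
      have hterm : ∀ i ∈ range k,
          ((1 - δ i) ^ ((α:ℝ) ^ (k - i))) ^ α = (1 - δ i) ^ ((α:ℝ) ^ (k + 1 - i)) := by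
        intro i hi
        have hik : i < k := Finset.mem_range.mp hi
        rw [← Real.rpow_mul (hf i).le, ← pow_succ]
        congr 2
        omega
      rw [Finset.prod_congr rfl hterm]
      have : k + 1 - k = 1 := by omega
      rw [this, pow_one]
      ring
  -- aggregated formula
  have key : ∀ k, ∏ i ∈ range (k + 1), e i =
      ε ^ (∑ j ∈ range (k + 1), α ^ j) *
        ∏ i ∈ range k, (1 - δ i) ^ (∑ j ∈ range (k - i), α ^ (j + 1)) := by
    intro k
    induction k with
    | zero => simp [he0]
    | succ k ih =>
      rw [Finset.prod_range_succ, ih, hek (k + 1)]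
      rw [Finset.prod_range_succ (fun i => (1 - δ i) ^ ((α:ℝ) ^ (k + 1 - i)))]
      have h1 : ε ^ (∑ j ∈ range (k + 1), α ^ j) * ε ^ ((α:ℝ) ^ (k+1)) =
          ε ^ (∑ j ∈ range (k + 2), α ^ j) := by
        rw [← Real.rpow_add hε, ← Finset.sum_range_succ (fun j => α ^ j) (k + 1)]
      have h2 : (∏ i ∈ range k, (1 - δ i) ^ (∑ j ∈ range (k - i), α ^ (j + 1))) *
          ∏ i ∈ range k, (1 - δ i) ^ ((α:ℝ) ^ (k + 1 - i)) =
          ∏ i ∈ range k, (1 - δ i) ^ (∑ j ∈ range (k + 1 - i), α ^ (j + 1)) := by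
        rw [← Finset.prod_mul_distrib]
        refine Finset.prod_congr rfl fun i hi => ?_
        have hik : i < k := Finset.mem_range.mp hi
        rw [← Real.rpow_add (hf i)]
        congr 1
        have h3 : k + 1 - i = (k - i) + 1 := by omega
        rw [h3, Finset.sum_range_succ]
      have h4 : (1 - δ k) ^ ((α:ℝ) ^ (k + 1 - k)) =
          (1 - δ k) ^ (∑ j ∈ range (k + 1 - k), α ^ (j + 1)) := by
        have : k + 1 - k = 1 := by omega
        simp [this]
      rw [Finset.prod_range_succ (fun i => (1 - δ i) ^ (∑ j ∈ range (k + 1 - i), α ^ (j + 1)))]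
      rw [← h1, ← h2, ← h4]
      ring
  -- final bound
  intro k _
  set S : ℝ := ∑ j ∈ range (k + 1), α ^ j with hS
  have hS0 : 0 ≤ S := Finset.sum_nonneg fun j _ => pow_nonneg hα0.le j
  have hθε' : 0 < θ / ε := div_pos hθ hε
  have hcle : ∀ i ∈ range k, (∑ j ∈ range (k - i), α ^ (j + 1)) ≤ S := by
    intro i hi
    have h5 : (∑ j ∈ range (k - i), α ^ (j + 1)) ≤ ∑ j ∈ range k, α ^ (j + 1) := by
      apply Finset.sum_le_sum_of_subset_of_nonneg
      · exact Finset.range_subset_range.mpr (by omega)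
      · intro j _ _; exact pow_nonneg hα0.le _
    have h6 : S = ∑ j ∈ range k, α ^ (j + 1) + 1 := by
      rw [hS, Finset.sum_range_succ']; simp
    linarith
  rw [key k]
  have step1 : θ ^ S = ε ^ S * (θ / ε) ^ S := by
    rw [← Real.mul_rpow hε.le hθε'.le, mul_div_cancel₀ _ hε.ne']
  rw [step1]
  have step2 : (θ / ε) ^ S ≤ ∏ i ∈ range k, (1 - δ i) ^ (∑ j ∈ range (k - i), α ^ (j + 1)) := by
    calc (θ / ε) ^ S ≤ (∏ i ∈ range k, (1 - δ i)) ^ S :=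
          Real.rpow_le_rpow hθε'.le (hpart k) hS0
      _ = ∏ i ∈ range k, (1 - δ i) ^ S :=
          (Real.finset_prod_rpow _ _ (fun i _ => (hf i).le) S).symm
      _ ≤ ∏ i ∈ range k, (1 - δ i) ^ (∑ j ∈ range (k - i), α ^ (j + 1)) := by
          refine Finset.prod_le_prod (fun i _ => Real.rpow_nonneg (hf i).le _) fun i hi => ?_
          exact Real.rpow_le_rpow_of_exponent_ge (hf i) (hf1 i) (hcle i hi)
  exact mul_le_mul_of_nonneg_left step2 (Real.rpow_nonneg hε.le _)
end

section
/- Let b ≥ 2 and N ≥ 2 be integers, let i ∈ {0,…,b−1}, and let P ⊆ {0,…,b−1} with i ∉ P. For k ∈ {0,…,N−1} define the k-component L_k = {i^k} ∪ {i^k p^{N−1−k} : p ∈ P} ⊆ b^{<N} (where i^k denotes the constant sequence of i's of length k and juxtaposition denotes concatenation). Then for any 0 ≤ k₀ < k₁ ≤ N−1 there exists a strong subtree F of b^{<N} of height 2 such that F|_{P∪{i}} ⊆ L_{k₀} ∪ L_{k₁}, where F|_Q = {F(0)} ∪ {the immediate successor of F(0) in F in direction q : q ∈ Q}. -/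
/-- Strict prefix relation on lists: the tree order on `b^{<ℕ}`. -/
def PLt {β : Type*} (s t : List β) : Prop := s <+: t ∧ s ≠ t

/-- The level of a node `t` in the tree `T ⊆ b^{<ℕ}`: the number of its strict
predecessors (strict prefixes) lying in `T`. -/
noncomputable def lvl {β : Type*} (T : Set (List β)) (t : List β) : ℕ :=
  {s ∈ T | PLt s t}.ncard

/-- `t` is an immediate successor of `s` in the tree `T`. -/
def ImmSuc {β : Type*} (T : Set (List β)) (s t : List β) : Prop :=
  s ∈ T ∧ t ∈ T ∧ PLt s t ∧ ¬∃ u ∈ T, PLt s u ∧ PLt u t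

/-- `T` is uniquely rooted: it has a node below all of its nodes. -/
def UniquelyRooted {β : Type*} (T : Set (List β)) : Prop :=
  ∃ r ∈ T, ∀ t ∈ T, r <+: t

/-- `C` is a maximal chain of the tree `T`. -/
def MaxChainIn {β : Type*} (T C : Set (List β)) : Prop :=
  C ⊆ T ∧ (∀ s ∈ C, ∀ t ∈ C, s <+: t ∨ t <+: s) ∧
    ∀ C', C ⊆ C' → C' ⊆ T → (∀ s ∈ C', ∀ t ∈ C', s <+: t ∨ t <+: s) → C' = C

/-- `T` is balanced with all maximal chains of cardinality `h`
(i.e. balanced and of height `h`). -/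
def BalancedOfHeight {β : Type*} (T : Set (List β)) (h : ℕ) : Prop :=
  ∀ C, MaxChainIn T C → C.Finite ∧ C.ncard = h

/-- Every level of `S` is a subset of some level of `T`. -/
def LevelsAligned {β : Type*} (T S : Set (List β)) : Prop :=
  ∀ s ∈ S, ∀ s' ∈ S, lvl S s = lvl S s' → lvl T s = lvl T s'

/-- For every non-maximal node `s` of `S` and every immediate successor `t` of `s`
in `T` there is a unique immediate successor `s'` of `s` in `S` with `t ≤ s'`. -/
def SuccCond {β : Type*} (T S : Set (List β)) : Prop :=
  ∀ s ∈ S, (∃ x ∈ S, PLt s x) → ∀ t, ImmSuc T s t → ∃! s', ImmSuc S s s' ∧ t <+: s'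

/-- `S` is a strong subtree of `T` of (finite) height `h`. -/
def IsStrongSubtreeFin {β : Type*} (T S : Set (List β)) (h : ℕ) : Prop :=
  S ⊆ T ∧ S.Nonempty ∧ UniquelyRooted S ∧ BalancedOfHeight S h ∧
    LevelsAligned T S ∧ SuccCond T S

/-- `S` is a strong subtree of `T` of infinite height (uniquely rooted, balanced with
all maximal chains infinite, levels of `S` inside levels of `T`, successor condition). -/
def IsStrongSubtreeInf {β : Type*} (T S : Set (List β)) : Prop :=
  S ⊆ T ∧ S.Nonempty ∧ UniquelyRooted S ∧ (∀ s ∈ S, ∃ x ∈ S, PLt s x) ∧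
    LevelsAligned T S ∧ SuccCond T S

/-- `r` is the root of `S`. -/
def IsRoot {β : Type*} (S : Set (List β)) (r : List β) : Prop :=
  r ∈ S ∧ ∀ x ∈ S, r <+: x

/-- `v` is the immediate successor of `u` in `S` in direction `p`, i.e. the unique
immediate successor of `u` in `S` extending `u⌢p`. -/
def DirSucc {β : Type*} (S : Set (List β)) (u : List β) (p : β) (v : List β) : Prop :=
  ImmSuc S u v ∧ (u ++ [p]) <+: v

/-- The `k`-component of the standard `(b,i,P,N)`-generalized Shelah line:
`{i^k} ∪ {i^k p^{N−1−k} : p ∈ P}`. -/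
def ShelahComponent (b N : ℕ) (i : Fin b) (P : Set (Fin b)) (k : ℕ) :
    Set (List (Fin b)) :=
  {List.replicate k i} ∪
    {w | ∃ p ∈ P, w = List.replicate k i ++ List.replicate (N - 1 - k) p}

lemma replicate_prefix_replicate {β : Type*} (a : β) {m n : ℕ} (h : m ≤ n) :
    List.replicate m a <+: List.replicate n a :=
  ⟨List.replicate (n - m) a, by rw [← List.replicate_add]; congr 1; omega⟩

lemma plt_iff {β : Type*} {s t : List β} : PLt s t ↔ s <+: t ∧ s.length < t.length := by
  unfold PLt
  constructor
  · rintro ⟨h, hne⟩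
    exact ⟨h, lt_of_le_of_ne h.length_le fun hl => hne (h.eq_of_length hl)⟩
  · rintro ⟨h, hl⟩
    exact ⟨h, fun he => absurd (he ▸ hl) (lt_irrefl _)⟩

lemma lvl_lt_tree {β : Type*} (N : ℕ) (t : List β) (ht : t.length < N) :
    lvl {l : List β | l.length < N} t = t.length := by
  have hset : {s ∈ {l : List β | l.length < N} | PLt s t}
      = (fun j => t.take j) '' Set.Iio t.length := by
    ext s
    simp only [Set.mem_setOf_eq, Set.mem_image, Set.mem_Iio]
    constructor
    · rintro ⟨hsN, hp⟩
      rw [plt_iff] at hp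
      exact ⟨s.length, hp.2, (List.prefix_iff_eq_take.mp hp.1).symm⟩
    · rintro ⟨j, hj, rfl⟩
      have hlen : (t.take j).length = j := by rw [List.length_take]; omega
      refine ⟨by omega, ?_⟩
      rw [plt_iff]
      exact ⟨List.take_prefix j t, by omega⟩
  rw [lvl, hset, Set.ncard_image_of_injOn, show (Set.Iio t.length) = ↑(Finset.Iio t.length) by
    ext; simp, Set.ncard_coe_finset]
  · simp
  · intro j hj j' hj' he
    have := congrArg List.length he
    simp only [List.length_take] at this
    simp only [Set.mem_Iio] at hj hj'
    omega

lemma strong_pair {b : ℕ} (hb : 0 < b) (N M : ℕ) (r : List (Fin b))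
    (s : Fin b → List (Fin b)) (hMN : M < N) (hrM : r.length < M)
    (hlen : ∀ q, (s q).length = M) (hpre : ∀ q, r ++ [q] <+: s q) :
    IsStrongSubtreeFin {l : List (Fin b) | l.length < N} ({r} ∪ Set.range s) 2 ∧
      IsRoot ({r} ∪ Set.range s) r ∧
      ∀ q v, DirSucc ({r} ∪ Set.range s) r q v → v = s q := by
  set F : Set (List (Fin b)) := {r} ∪ Set.range s with hF
  have hmem : ∀ x, x ∈ F ↔ x = r ∨ ∃ q, x = s q := by
    intro x
    simp only [hF, Set.mem_union, Set.mem_singleton_iff, Set.mem_range]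
    constructor
    · rintro (h | ⟨q, h⟩); exacts [Or.inl h, Or.inr ⟨q, h.symm⟩]
    · rintro (h | ⟨q, h⟩); exacts [Or.inl h, Or.inr ⟨q, h.symm⟩]
  have hrs : ∀ q, r ≠ s q := by
    intro q he
    have := hlen q
    rw [← he] at this
    omega
  have hrpre : ∀ q, r <+: s q := fun q => (List.prefix_append r [q]).trans (hpre q)
  have hPltrs : ∀ q, PLt r (s q) := fun q => ⟨hrpre q, hrs q⟩
  have hdec : ∀ q, ∃ u, s q = r ++ q :: u := by
    intro q
    obtain ⟨u, hu⟩ := hpre q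
    exact ⟨u, by rw [← hu, List.append_assoc]; rfl⟩
  have hinj : ∀ q q', s q <+: s q' → q = q' := by
    intro q q' hp
    have heq : s q = s q' := hp.eq_of_length (by rw [hlen, hlen])
    obtain ⟨u, hu⟩ := hdec q
    obtain ⟨u', hu'⟩ := hdec q'
    rw [hu, hu'] at heq
    have h2 := List.append_cancel_left heq
    injection h2
  have hnoplt : ∀ q q', ¬ PLt (s q) (s q') := by
    rintro q q' ⟨hp, hne⟩
    exact hne (hp.eq_of_length (by rw [hlen, hlen]))
  have hnopltr : ∀ q, ¬ PLt (s q) r := by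
    intro q h
    rw [plt_iff] at h
    have := hlen q
    omega
  have hrF : r ∈ F := Or.inl rfl
  have hsF : ∀ q, s q ∈ F := fun q => Or.inr ⟨q, rfl⟩
  have hcompat : ∀ x ∈ F, r <+: x := by
    intro x hx
    rcases (hmem x).mp hx with h | ⟨q, rfl⟩
    · rw [h]
    · exact hrpre q
  have himm : ∀ q, ImmSuc F r (s q) := by
    intro q
    refine ⟨hrF, hsF q, hPltrs q, ?_⟩
    rintro ⟨u, huF, hru, hus⟩
    rcases (hmem u).mp huF with rfl | ⟨q', rfl⟩
    · exact hru.2 rfl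
    · exact hnoplt q' q hus
  have hdiru : ∀ q v, ImmSuc F r v → (r ++ [q]) <+: v → v = s q := by
    intro q v hv hpv
    rcases (hmem v).mp hv.2.1 with h | ⟨q', rfl⟩
    · exact absurd h.symm hv.2.2.1.2
    · obtain ⟨u', hu'⟩ := hdec q'
      rw [hu'] at hpv
      have h1 : [q] <+: q' :: u' := (List.prefix_append_right_inj r).mp hpv
      obtain ⟨w, hw⟩ := h1
      simp only [List.singleton_append, List.cons.injEq] at hw
      exact (congrArg s hw.1).symm
  refine ⟨⟨?_, ⟨r, hrF⟩, ⟨r, hrF, hcompat⟩, ?_, ?_, ?_⟩, ⟨hrF, hcompat⟩,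
    fun q v hv => hdiru q v hv.1 hv.2⟩
  · -- subset
    intro x hx
    rcases (hmem x).mp hx with h | ⟨q, rfl⟩
    · simp only [Set.mem_setOf_eq, h]; omega
    · show (s q).length < N; rw [hlen]; omega
  · -- Balanced of height 2
    rintro C ⟨hCF, hchain, hmax⟩
    have hrC : r ∈ C := by
      have h1 : insert r C = C := by
        apply hmax _ (Set.subset_insert _ _) (Set.insert_subset hrF hCF)
        intro x hx y hy
        simp only [Set.mem_insert_iff] at hx hy
        rcases hx with rfl | hx
        · rcases hy with rfl | hy
          · exact Or.inl (List.prefix_refl _)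
          · exact Or.inl (hcompat y (hCF hy))
        · rcases hy with rfl | hy
          · exact Or.inr (hcompat x (hCF hx))
          · exact hchain x hx y hy
      rw [← h1]; exact Set.mem_insert r C
    have hq : ∃ q, s q ∈ C := by
      by_contra hno
      push_neg at hno
      set q0 : Fin b := ⟨0, hb⟩ with hq0
      have hCr : ∀ z ∈ C, z = r := by
        intro z hz
        rcases (hmem z).mp (hCF hz) with rfl | ⟨q, rfl⟩
        · rfl
        · exact absurd hz (hno q)
      have h1 : insert (s q0) C = C := by
        apply hmax _ (Set.subset_insert _ _) (Set.insert_subset (hsF q0) hCF)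
        intro x hx y hy
        simp only [Set.mem_insert_iff] at hx hy
        rcases hx with rfl | hx
        · rcases hy with rfl | hy
          · exact Or.inl (List.prefix_refl _)
          · rw [hCr y hy]; exact Or.inr (hrpre q0)
        · rcases hy with rfl | hy
          · rw [hCr x hx]; exact Or.inl (hrpre q0)
          · exact hchain x hx y hy
      exact hno q0 (h1 ▸ Set.mem_insert _ _)
    obtain ⟨q, hqC⟩ := hq
    have hC2 : C = {r, s q} := by
      apply Set.Subset.antisymm
      · intro x hx
        rcases (hmem x).mp (hCF hx) with rfl | ⟨q', rfl⟩
        · exact Set.mem_insert _ _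
        · have hcc := hchain _ hx _ hqC
          have hqq : q' = q := by
            rcases hcc with h | h
            exacts [hinj _ _ h, (hinj _ _ h).symm]
          rw [hqq]
          exact Set.mem_insert_of_mem _ rfl
      · intro x hx
        rcases hx with rfl | hx
        · exact hrC
        · rw [Set.mem_singleton_iff] at hx
          rw [hx]; exact hqC
    rw [hC2]
    exact ⟨(Set.finite_singleton _).insert _, Set.ncard_pair (hrs q)⟩
  · -- LevelsAligned
    have hlvlr : lvl F r = 0 := by
      rw [lvl]
      convert Set.ncard_empty (List (Fin b))
      ext x
      simp only [Set.mem_sep_iff, Set.mem_empty_iff_false, iff_false, not_and]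
      intro hxF hx
      rcases (hmem x).mp hxF with rfl | ⟨q, rfl⟩
      · exact hx.2 rfl
      · exact hnopltr q hx
    have hlvls : ∀ q, lvl F (s q) = 1 := by
      intro q
      rw [lvl]
      have hss : {x ∈ F | PLt x (s q)} = {r} := by
        ext x
        simp only [Set.mem_sep_iff, Set.mem_singleton_iff]
        constructor
        · rintro ⟨hxF, hx⟩
          rcases (hmem x).mp hxF with rfl | ⟨q', rfl⟩
          · rfl
          · exact absurd hx (hnoplt q' q)
        · rintro rfl
          exact ⟨hrF, hPltrs q⟩
      rw [hss, Set.ncard_singleton]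
    intro x hx x' hx' hll
    have hT : ∀ y ∈ F, lvl {l : List (Fin b) | l.length < N} y = y.length := by
      intro y hy
      rcases (hmem y).mp hy with h | ⟨q, rfl⟩
      · rw [h]; exact lvl_lt_tree N r (by omega)
      · exact lvl_lt_tree N (s q) (by rw [hlen]; omega)
    rw [hT x hx, hT x' hx']
    rcases (hmem x).mp hx with h | ⟨q, rfl⟩ <;>
      rcases (hmem x').mp hx' with h' | ⟨q', rfl⟩
    · rw [h, h']
    · rw [h, hlvlr, hlvls q'] at hll; omega
    · rw [h', hlvls, hlvlr] at hll; omega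
    · rw [hlen, hlen]
  · -- SuccCond
    intro x hxF hex t ht
    have hxr : r = x := by
      rcases (hmem x).mp hxF with h | ⟨q, rfl⟩
      · exact h.symm
      · obtain ⟨y, hyF, hy⟩ := hex
        rcases (hmem y).mp hyF with rfl | ⟨q', rfl⟩
        · exact absurd hy (hnopltr q)
        · exact absurd hy (hnoplt q q')
    subst hxr
    obtain ⟨-, htT, hplt, hno⟩ := ht
    have h1 : r.length < t.length := (plt_iff.mp hplt).2
    have htN : t.length < N := htT
    have htlen : t.length = r.length + 1 := by
      by_contra hne2
      have h2 : r.length + 1 < t.length := by omega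
      set u := t.take (r.length + 1) with hu
      have hul : u.length = r.length + 1 := by rw [hu, List.length_take]; omega
      have huT : u ∈ {l : List (Fin b) | l.length < N} := by
        simp only [Set.mem_setOf_eq, hul]; omega
      have hut : u <+: t := List.take_prefix _ _
      have hru : r <+: u := List.prefix_of_prefix_length_le hplt.1 hut (by omega)
      refine hno ⟨u, huT, ⟨hru, ?_⟩, hut, ?_⟩
      · intro h
        have := congrArg List.length h
        omega
      · intro h
        have := congrArg List.length h
        omega
    obtain ⟨w, hw⟩ := hplt.1
    have hwlen : w.length = 1 := by
      have := congrArg List.length hw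
      simp only [List.length_append] at this
      omega
    obtain ⟨q, rfl⟩ := List.length_eq_one_iff.mp hwlen
    subst hw
    refine ⟨s q, ⟨himm q, hpre q⟩, ?_⟩
    rintro y ⟨hy, hty⟩
    exact hdiru q y hy hty

theorem stmt6 (b N : ℕ) (hb : 2 ≤ b) (hN : 2 ≤ N) (i : Fin b) (P : Set (Fin b))
    (hiP : i ∉ P) (k₀ k₁ : ℕ) (h01 : k₀ < k₁) (h1 : k₁ ≤ N - 1) :
    ∃ F : Set (List (Fin b)),
      IsStrongSubtreeFin {l : List (Fin b) | l.length < N} F 2 ∧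
      ∃ r, IsRoot F r ∧
        ({r} ∪ {v | ∃ q ∈ P ∪ {i}, DirSucc F r q v}) ⊆
          ShelahComponent b N i P k₀ ∪ ShelahComponent b N i P k₁ := by
  classical
  have hk0 : k₀ < N - 1 := lt_of_lt_of_le h01 h1
  rcases P.eq_empty_or_nonempty with hPe | ⟨p₀, hp₀⟩
  · -- P is empty
    set s : Fin b → List (Fin b) := fun q =>
      if q = i then List.replicate k₁ i
      else List.replicate k₀ i ++ List.replicate (k₁ - k₀) q with hs
    obtain ⟨hstrong, hroot, huniq⟩ :=
      strong_pair (b := b) (by omega) N k₁ (List.replicate k₀ i) s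
        (by omega) (by simpa using h01)
        (fun q => by
          by_cases h : q = i <;> simp [hs, h] <;> omega)
        (fun q => by
          by_cases h : q = i
          · rw [h]
            simp only [hs, if_pos rfl]
            rw [← List.replicate_succ']
            exact replicate_prefix_replicate i (by omega)
          · simp only [hs, if_neg h]
            refine (List.prefix_append_right_inj _).mpr ?_
            rw [← List.replicate_one (a := q)]
            exact replicate_prefix_replicate q (by omega))
    refine ⟨_, hstrong, List.replicate k₀ i, hroot, ?_⟩
    rintro x (hx | ⟨q, hqPi, hdq⟩)
    · rw [Set.mem_singleton_iff] at hx
      subst hx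
      exact Or.inl (Or.inl rfl)
    · have hqi : q = i := by
        rcases hqPi with h | h
        · rw [hPe] at h; exact absurd h (Set.notMem_empty q)
        · exact h
      rw [hqi] at hdq
      have hxq := huniq i x hdq
      right; left
      rw [hxq]
      simp [hs]
  · -- P is nonempty, with p₀ ∈ P
    set s : Fin b → List (Fin b) := fun q =>
      if q = i then List.replicate k₁ i ++ List.replicate (N - 1 - k₁) p₀
      else List.replicate k₀ i ++ List.replicate (N - 1 - k₀) q with hs
    obtain ⟨hstrong, hroot, huniq⟩ :=
      strong_pair (b := b) (by omega) N (N - 1) (List.replicate k₀ i) s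
        (by omega) (by simpa using hk0)
        (fun q => by
          by_cases h : q = i <;> simp [hs, h] <;> omega)
        (fun q => by
          by_cases h : q = i
          · rw [h]
            simp only [hs, if_pos rfl]
            refine (?_ : List.replicate k₀ i ++ [i] <+: List.replicate k₁ i).trans
              (List.prefix_append _ _)
            rw [← List.replicate_succ']
            exact replicate_prefix_replicate i (by omega)
          · simp only [hs, if_neg h]
            refine (List.prefix_append_right_inj _).mpr ?_
            rw [← List.replicate_one (a := q)]
            exact replicate_prefix_replicate q (by omega))
    refine ⟨_, hstrong, List.replicate k₀ i, hroot, ?_⟩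
    rintro x (hx | ⟨q, hqPi, hdq⟩)
    · rw [Set.mem_singleton_iff] at hx
      subst hx
      exact Or.inl (Or.inl rfl)
    · have hxq := huniq q x hdq
      by_cases h : q = i
      · rw [h] at hdq
        have hxq := huniq i x hdq
        right; right
        rw [hxq]
        simp only [hs, if_pos rfl]
        exact ⟨p₀, hp₀, rfl⟩
      · have hqP : q ∈ P := by
          rcases hqPi with h' | h'
          · exact h'
          · exact absurd h' h
        left; right
        rw [hxq]
        simp only [hs, if_neg h]
        exact ⟨q, hqP, rfl⟩
end

section
/- Let T be a homogeneous tree (a strong subtree of b^{<ℕ} of infinite height for some b ≥ 2) and n ≥ 1. Then every subset F of T of cardinality n is contained in a strong subtree of T of height 2n − 1. -/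
/-!
The pairwise meets (longest common prefixes) of the elements of `F` form a meet-closed set
`A ⊇ F` of at most `2n - 1` nodes, hence occupying at most `2n - 1` levels of `T`; enumerate
these levels as `d 0 < d 1 < ⋯` and continue beyond them. Embed the full tree `b^{<ℕ}` into `T`
level by level, sending level `i` to level `d i` and the successor of `σ` in direction `p` above
the successor of the image of `σ` in direction `p`, choosing the new node below an element of `A`
whenever one goes that way. Meet-closedness of `A` makes these choices consistent, so every
element of `A` is hit, and the image of the first `2n - 1` levels is the required strong subtree.
-/

namespace StrongSubtree

open List

variable {β : Type*}

lemma _root_.PLt.length_lt {s t : List β} (h : PLt s t) : s.length < t.length :=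
  lt_of_le_of_ne h.1.length_le fun he => h.2 (h.1.eq_of_length he)

lemma plt_of_prefix_of_length_lt {s t : List β} (h : s <+: t) (hl : s.length < t.length) :
    PLt s t :=
  ⟨h, by rintro rfl; exact lt_irrefl _ hl⟩

lemma _root_.PLt.trans_prefix {s t u : List β} (h : PLt s t) (h' : t <+: u) : PLt s u :=
  plt_of_prefix_of_length_lt (h.1.trans h') (h.length_lt.trans_le h'.length_le)

lemma plt_append_singleton (s : List β) (p : β) : PLt s (s ++ [p]) :=
  plt_of_prefix_of_length_lt (prefix_append s [p]) (by simp)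

lemma _root_.PLt.exists_append_singleton_prefix {s t : List β} (h : PLt s t) :
    ∃ p, s ++ [p] <+: t := by
  obtain ⟨_ | ⟨p, u⟩, rfl⟩ := h.1
  · exact absurd (append_nil s).symm h.2
  · exact ⟨p, u, by simp⟩

lemma eq_of_append_singleton_prefix {s t : List β} {p q : β} (hp : s ++ [p] <+: t)
    (hq : s ++ [q] <+: t) : p = q := by
  simpa using antisymm (prefix_of_prefix_length_le hp hq (by simp))
    (prefix_of_prefix_length_le hq hp (by simp))

lemma append_singleton_prefix_of_plt {s v a : List β} {p : β} (hp : s ++ [p] <+: a)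
    (hsv : PLt s v) (hva : v <+: a) : s ++ [p] <+: v :=
  prefix_of_prefix_length_le hp hva (by simpa using hsv.length_lt)

lemma setOf_prefix_finite (t : List β) : {s | s <+: t}.Finite := by
  simpa only [mem_inits] using t.inits.finite_toSet

lemma ncard_setOf_plt (t : List β) : {s | PLt s t}.ncard = t.length := by
  have : {s | PLt s t} = (t.take ·) '' Set.Iio t.length := by
    ext s
    refine ⟨fun h => ⟨s.length, h.length_lt, (prefix_iff_eq_take.mp h.1).symm⟩, ?_⟩
    rintro ⟨i, hi, rfl⟩
    exact plt_of_prefix_of_length_lt (take_prefix i t) (by simpa using hi)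
  rw [this, Set.InjOn.ncard_image, Set.ncard_Iio_nat]
  intro i hi j hj hij
  simpa [(Set.mem_Iio.mp hi).le, (Set.mem_Iio.mp hj).le] using congrArg length hij

lemma ncard_setOf_prefix (t : List β) : {s | s <+: t}.ncard = t.length + 1 := by
  have : {s | s <+: t} = insert t {s | PLt s t} := by
    ext s
    by_cases hs : s = t <;> simp [PLt, hs]
  rw [this, Set.ncard_insert_of_notMem (fun h => h.2 rfl) ((setOf_prefix_finite t).subset
    fun _ h => h.1), ncard_setOf_plt]

section Level

variable {T : Set (List β)}

lemma setOf_plt_finite (T : Set (List β)) (t : List β) : {s ∈ T | PLt s t}.Finite :=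
  (setOf_prefix_finite t).subset fun _ hs => hs.2.1

lemma lvl_lt_lvl {x y : List β} (hx : x ∈ T) (h : PLt x y) : lvl T x < lvl T y :=
  Set.ncard_lt_ncard ⟨fun _ hs => ⟨hs.1, hs.2.trans_prefix h.1⟩, fun hsub => (hsub ⟨hx, h⟩).2.2 rfl⟩
    (setOf_plt_finite T y)

lemma lvl_le_lvl {x y : List β} (hx : x ∈ T) (h : x <+: y) : lvl T x ≤ lvl T y := by
  rcases eq_or_ne x y with rfl | hne
  · rfl
  · exact (lvl_lt_lvl hx ⟨h, hne⟩).le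

lemma eq_of_prefix_of_lvl_eq {x y a : List β} (hx : x ∈ T) (hy : y ∈ T) (hxa : x <+: a)
    (hya : y <+: a) (h : lvl T x = lvl T y) : x = y := by
  by_contra hne
  rcases prefix_or_prefix_of_prefix hxa hya with hxy | hyx
  · exact (lvl_lt_lvl hx ⟨hxy, hne⟩).ne h
  · exact (lvl_lt_lvl hy ⟨hyx, Ne.symm hne⟩).ne h.symm

lemma plt_of_lvl_lt {u v a : List β} (hv : v ∈ T) (hua : u <+: a) (hva : v <+: a)
    (h : lvl T u < lvl T v) : PLt u v := by
  rcases prefix_or_prefix_of_prefix hua hva with huv | hvu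
  · exact ⟨huv, by rintro rfl; exact lt_irrefl _ h⟩
  · exact absurd (lvl_le_lvl hv hvu) h.not_ge

lemma _root_.ImmSuc.lvl_eq {s t : List β} (h : ImmSuc T s t) : lvl T t = lvl T s + 1 := by
  obtain ⟨hs, -, hst, hnone⟩ := h
  have : {x ∈ T | PLt x t} = insert s {x ∈ T | PLt x s} := by
    ext x
    simp only [Set.mem_ofPred_eq, Set.mem_insert_iff]
    constructor
    · rintro ⟨hx, hxt⟩
      rcases eq_or_ne x s with rfl | hne
      · exact Or.inl rfl
      rcases prefix_or_prefix_of_prefix hxt.1 hst.1 with hxs | hsx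
      · exact Or.inr ⟨hx, hxs, hne⟩
      · exact absurd ⟨x, hx, ⟨hsx, Ne.symm hne⟩, hxt⟩ hnone
    · rintro (rfl | ⟨hx, hxs⟩)
      · exact ⟨hs, hst⟩
      · exact ⟨hx, hxs.trans_prefix hst.1⟩
  rw [lvl, this, Set.ncard_insert_of_notMem (fun h => h.2.2 rfl) (setOf_plt_finite T s)]
  rfl

/-- The `T`-predecessors of `u` have pairwise distinct levels below `lvl T u`; as there are
`lvl T u` of them, every such level is attained. -/
lemma exists_prefix_lvl_eq {u : List β} (hu : u ∈ T) {e : ℕ} (he : e ≤ lvl T u) :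
    ∃ w ∈ T, w <+: u ∧ lvl T w = e := by
  rcases he.eq_or_lt with rfl | he
  · exact ⟨u, hu, prefix_rfl, rfl⟩
  obtain ⟨w, hw, rfl⟩ := Set.surj_on_of_inj_on_of_ncard_le (s := {s ∈ T | PLt s u})
    (t := Set.Iio (lvl T u)) (fun w _ => lvl T w) (fun w hw => lvl_lt_lvl hw.1 hw.2)
    (fun w w' hw hw' h => eq_of_prefix_of_lvl_eq hw.1 hw'.1 hw.2.1 hw'.2.1 h)
    (by rw [Set.ncard_Iio_nat]; rfl) (Set.finite_Iio _) e he
  exact ⟨w, hw.1, hw.2.1, rfl⟩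

lemma exists_extension_lvl_ge (hT : ∀ s ∈ T, ∃ x ∈ T, PLt s x) {u : List β} (hu : u ∈ T) (e : ℕ) :
    ∃ v ∈ T, u <+: v ∧ e ≤ lvl T v := by
  induction e with
  | zero => exact ⟨u, hu, prefix_rfl, Nat.zero_le _⟩
  | succ e ih =>
    obtain ⟨v, hv, huv, hev⟩ := ih
    obtain ⟨x, hx, hvx⟩ := hT v hv
    exact ⟨x, hx, huv.trans hvx.1, hev.trans_lt (lvl_lt_lvl hv hvx)⟩

lemma exists_extension_lvl_eq (hT : ∀ s ∈ T, ∃ x ∈ T, PLt s x) {u : List β} (hu : u ∈ T)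
    {e : ℕ} (he : lvl T u ≤ e) : ∃ v ∈ T, u <+: v ∧ lvl T v = e := by
  obtain ⟨x, hx, hux, hex⟩ := exists_extension_lvl_ge hT hu e
  obtain ⟨v, hv, hvx, rfl⟩ := exists_prefix_lvl_eq hx hex
  refine ⟨v, hv, ?_, rfl⟩
  rcases prefix_or_prefix_of_prefix hux hvx with h | h
  · exact h
  · rw [eq_of_prefix_of_lvl_eq hv hu h prefix_rfl (he.antisymm (lvl_le_lvl hv h)).symm]

end Level

section CommonPrefix

variable [DecidableEq β]

/-- Longest common prefix: the meet in the prefix order. -/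
def lcp : List β → List β → List β
  | a :: s, c :: t => if a = c then a :: lcp s t else []
  | _, _ => []

lemma lcp_prefix_left : ∀ s t : List β, lcp s t <+: s
  | [], _ => by simp [lcp]
  | a :: s, [] => by simp [lcp]
  | a :: s, c :: t => by
    by_cases h : a = c
    · subst h; simpa [lcp] using lcp_prefix_left s t
    · simp [lcp, h]

lemma lcp_prefix_right : ∀ s t : List β, lcp s t <+: t
  | [], _ => by simp [lcp]
  | a :: s, [] => by simp [lcp]
  | a :: s, c :: t => by
    by_cases h : a = c
    · subst h; simpa [lcp] using lcp_prefix_right s t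
    · simp [lcp, h]

lemma prefix_lcp : ∀ {x s t : List β}, x <+: s → x <+: t → x <+: lcp s t
  | [], _, _, _, _ => nil_prefix
  | a :: x, _, _, ⟨s, rfl⟩, ⟨t, rfl⟩ => by
    simpa [lcp] using prefix_lcp (prefix_append x s) (prefix_append x t)

lemma lcp_comm (s t : List β) : lcp s t = lcp t s :=
  antisymm (prefix_lcp (lcp_prefix_right s t) (lcp_prefix_left s t))
    (prefix_lcp (lcp_prefix_right t s) (lcp_prefix_left t s))

lemma lcp_self (s : List β) : lcp s s = s :=
  antisymm (lcp_prefix_left s s) (prefix_lcp prefix_rfl prefix_rfl)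

lemma lcp_lcp_eq_or (a c f : List β) :
    lcp (lcp a c) f = lcp a f ∨ lcp (lcp a c) f = lcp c f := by
  have h1 : lcp (lcp a c) f <+: lcp a f :=
    prefix_lcp ((lcp_prefix_left _ _).trans (lcp_prefix_left a c)) (lcp_prefix_right _ _)
  have h2 : lcp (lcp a c) f <+: lcp c f :=
    prefix_lcp ((lcp_prefix_left _ _).trans (lcp_prefix_right a c)) (lcp_prefix_right _ _)
  rcases prefix_or_prefix_of_prefix (lcp_prefix_right a f) (lcp_prefix_right c f) with h | h
  · exact Or.inl (antisymm h1 (prefix_lcp (prefix_lcp (lcp_prefix_left a f)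
      (h.trans (lcp_prefix_left c f))) (lcp_prefix_right a f)))
  · exact Or.inr (antisymm h2 (prefix_lcp (prefix_lcp (h.trans (lcp_prefix_left a f))
      (lcp_prefix_left c f)) (lcp_prefix_right c f)))

/-- The ultrametric property of the prefix order. -/
lemma lcp_eq_or_eq_lcp_of_length_le {x g g₀ : List β}
    (h : (lcp x g).length ≤ (lcp x g₀).length) : lcp x g = lcp x g₀ ∨ lcp x g = lcp g₀ g := by
  have hle : lcp x g <+: lcp x g₀ :=
    prefix_of_prefix_length_le (lcp_prefix_left x g) (lcp_prefix_left x g₀) h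
  rcases prefix_or_prefix_of_prefix (lcp_prefix_right x g₀) (lcp_prefix_left g₀ g) with h' | h'
  · exact Or.inl (antisymm hle (prefix_lcp (lcp_prefix_left x g₀)
      (h'.trans (lcp_prefix_right g₀ g))))
  · exact Or.inr (antisymm (prefix_lcp (hle.trans (lcp_prefix_right x g₀)) (lcp_prefix_right x g))
      (prefix_lcp (h'.trans (lcp_prefix_left x g₀)) (lcp_prefix_right g₀ g)))

def meetClosure (G : Finset (List β)) : Finset (List β) := Finset.image₂ lcp G G

lemma subset_meetClosure (G : Finset (List β)) : G ⊆ meetClosure G := fun x hx =>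
  lcp_self x ▸ Finset.mem_image₂_of_mem hx hx

lemma lcp_mem_meetClosure {G : Finset (List β)} {a a' : List β} (ha : a ∈ meetClosure G)
    (ha' : a' ∈ meetClosure G) : lcp a a' ∈ meetClosure G := by
  obtain ⟨x, hx, y, hy, rfl⟩ := Finset.mem_image₂.mp ha
  obtain ⟨x', hx', y', hy', rfl⟩ := Finset.mem_image₂.mp ha'
  rcases lcp_lcp_eq_or x y (lcp x' y') with h | h <;> rw [h, lcp_comm] <;>
    rcases lcp_lcp_eq_or x' y' _ with h' | h' <;> rw [h', lcp_comm] <;>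
    exact Finset.mem_image₂_of_mem ‹_› ‹_›

lemma meetClosure_insert (x : List β) (G : Finset (List β)) :
    meetClosure (insert x G) = insert x (G.image (lcp x) ∪ meetClosure G) := by
  rw [meetClosure, Finset.image₂_insert_left, Finset.image₂_insert_right, Finset.image_insert,
    lcp_self, Finset.image_congr fun g _ => lcp_comm g x, meetClosure]
  ext y
  simp only [Finset.mem_insert, Finset.mem_union]
  tauto

/-- Adding a node `x` to `G` creates at most two new meets: `x` itself and its longest meet
with an element of `G`. -/
lemma card_meetClosure_le {G : Finset (List β)} (hG : G.Nonempty) :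
    (meetClosure G).card ≤ 2 * G.card - 1 := by
  induction hG using Finset.Nonempty.cons_induction with
  | singleton x => simp [meetClosure, lcp_self]
  | cons x G hx hG ih =>
    obtain ⟨_, hm, hmax⟩ := (G.image (lcp x)).exists_max_image length (hG.image _)
    obtain ⟨g₀, hg₀, rfl⟩ := Finset.mem_image.mp hm
    have hsub : G.image (lcp x) ∪ meetClosure G ⊆ insert (lcp x g₀) (meetClosure G) := by
      refine Finset.union_subset (fun y hy => ?_) (Finset.subset_insert _ _)
      obtain ⟨g, hg, rfl⟩ := Finset.mem_image.mp hy
      rcases lcp_eq_or_eq_lcp_of_length_le (hmax _ hy) with h | h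
      · exact h ▸ Finset.mem_insert_self _ _
      · exact Finset.mem_insert_of_mem (h ▸ Finset.mem_image₂_of_mem hg₀ hg)
    calc (meetClosure (G.cons x hx)).card
        ≤ (G.image (lcp x) ∪ meetClosure G).card + 1 := by
          rw [Finset.cons_eq_insert, meetClosure_insert]; exact Finset.card_insert_le _ _
      _ ≤ (meetClosure G).card + 2 := by
          grw [Finset.card_le_card hsub, Finset.card_insert_le]
      _ ≤ 2 * (G.cons x hx).card - 1 := by
          rw [Finset.card_cons]; have := hG.card_pos; omega

end CommonPrefix

section HomogeneousTree

variable {T : Set (List β)}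

lemma immSuc_univ_append_singleton (s : List β) (p : β) : ImmSuc Set.univ s (s ++ [p]) := by
  refine ⟨trivial, trivial, plt_append_singleton s p, ?_⟩
  rintro ⟨u, -, hsu, hut⟩
  have := hsu.length_lt
  have := hut.length_lt
  simp only [length_append, length_singleton] at this
  omega

variable (hT : IsStrongSubtreeInf Set.univ T)
include hT

lemma existsUnique_immSuc {u : List β} (hu : u ∈ T) (p : β) :
    ∃! t, ImmSuc T u t ∧ u ++ [p] <+: t :=
  hT.2.2.2.2.2 u hu (hT.2.2.2.1 u hu) _ (immSuc_univ_append_singleton u p)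

lemma _root_.ImmSuc.prefix_of_append_singleton_prefix {u t v : List β} {p : β}
    (ht : ImmSuc T u t) (hut : u ++ [p] <+: t) (hv : v ∈ T) (huv : u ++ [p] <+: v) :
    t <+: v := by
  have hu := ht.1
  have hlt : lvl T u < lvl T v := lvl_lt_lvl hu ((plt_append_singleton u p).trans_prefix huv)
  obtain ⟨w, hw, hwv, hlw⟩ := exists_prefix_lvl_eq hv (Nat.succ_le_of_lt hlt)
  have huw : PLt u w := plt_of_lvl_lt hw ((prefix_append u [p]).trans huv) hwv (by omega)
  have himm : ImmSuc T u w := ⟨hu, hw, huw, fun ⟨z, hz, huz, hzw⟩ => by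
    have := lvl_lt_lvl hu huz; have := lvl_lt_lvl hz hzw; omega⟩
  rw [(existsUnique_immSuc hT hu p).unique ⟨ht, hut⟩
    ⟨himm, append_singleton_prefix_of_plt huv huw hwv⟩]
  exact hwv

lemma exists_append_singleton_prefix_lvl_eq {u : List β} (hu : u ∈ T) {e : ℕ}
    (he : lvl T u < e) (p : β) : ∃ v ∈ T, u ++ [p] <+: v ∧ lvl T v = e := by
  obtain ⟨t, ht, hut⟩ := (existsUnique_immSuc hT hu p).exists
  obtain ⟨v, hv, htv, rfl⟩ :=
    exists_extension_lvl_eq hT.2.2.2.1 ht.2.1 (ht.lvl_eq.trans_le he)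
  exact ⟨_, hv, hut.trans htv, rfl⟩

/-- The longest common `T`-predecessor `x` of `a` and `a'` is their meet, since otherwise the
`T`-successor of `x` towards the meet would be a longer one. -/
lemma lcp_mem [DecidableEq β] {a a' : List β} (ha : a ∈ T) (ha' : a' ∈ T) : lcp a a' ∈ T := by
  obtain ⟨r, hr, hroot⟩ := hT.2.2.1
  obtain ⟨x, ⟨hx, hxa, hxa'⟩, hmax⟩ := Set.exists_max_image {x ∈ T | x <+: a ∧ x <+: a'} length
    ((setOf_prefix_finite a).subset fun _ h => h.2.1) ⟨r, hr, hroot a ha, hroot a' ha'⟩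
  have hxl : x <+: lcp a a' := prefix_lcp hxa hxa'
  by_contra hne
  obtain ⟨p, hp⟩ := PLt.exists_append_singleton_prefix ⟨hxl, by rintro rfl; exact hne hx⟩
  obtain ⟨t, ht, hxt⟩ := (existsUnique_immSuc hT hx p).exists
  have hta := ht.prefix_of_append_singleton_prefix hT hxt ha (hp.trans (lcp_prefix_left a a'))
  have hta' := ht.prefix_of_append_singleton_prefix hT hxt ha' (hp.trans (lcp_prefix_right a a'))
  exact (hmax t ⟨ht.2.1, hta, hta'⟩).not_gt ht.2.2.1.length_lt

lemma coe_meetClosure_subset [DecidableEq β] {G : Finset (List β)} (hG : ↑G ⊆ T) :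
    ↑(meetClosure G) ⊆ T := by
  intro a ha
  obtain ⟨x, hx, y, hy, rfl⟩ := Finset.mem_image₂.mp ha
  exact lcp_mem hT (hG hx) (hG hy)

end HomogeneousTree

lemma exists_strictMono_enum (L : Finset ℕ) :
    ∃ d : ℕ → ℕ, StrictMono d ∧ ∀ x ∈ L, ∃ i < L.card, x = d i := by
  classical
  set P : ℕ → Prop := fun x => x ∈ L ∨ L.sup id < x
  have hP : (Set.ofPred P).Infinite :=
    (Set.Ioi_infinite (L.sup id)).mono fun x hx => Or.inr hx
  refine ⟨Nat.nth P, Nat.nth_strictMono hP, fun x hx =>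
    ⟨Nat.count P x, ?_, (Nat.nth_count (Or.inl hx)).symm⟩⟩
  have hsub : (Finset.range x).filter P ⊆ L.erase x := by
    intro y hy
    obtain ⟨hyx, hy⟩ := Finset.mem_filter.mp hy
    have hyx := Finset.mem_range.mp hyx
    refine Finset.mem_erase.mpr ⟨hyx.ne, hy.resolve_right fun h => ?_⟩
    exact (Finset.le_sup (f := id) hx).not_gt (h.trans hyx)
  rw [Nat.count_eq_card_filter_range]
  exact (Finset.card_le_card hsub).trans_lt (Finset.card_erase_lt_of_mem hx)

structure IsLevelEmbedding (T : Set (List β)) (d : ℕ → ℕ) (f : List β → List β) : Prop where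
  mem : ∀ σ, f σ ∈ T
  lvl_eq : ∀ σ, lvl T (f σ) = d σ.length
  append_singleton_prefix : ∀ σ p, f σ ++ [p] <+: f (σ ++ [p])

namespace IsLevelEmbedding

variable {T : Set (List β)} {d : ℕ → ℕ} {f : List β → List β}
  (hf : IsLevelEmbedding T d f)
include hf

lemma apply_prefix_apply {σ τ : List β} (h : σ <+: τ) : f σ <+: f τ := by
  obtain ⟨ρ, rfl⟩ := h
  induction ρ using reverseRecOn with
  | nil => rw [append_nil]
  | append_singleton ρ p ih =>
    rw [← append_assoc]
    exact ih.trans ((prefix_append _ _).trans (hf.append_singleton_prefix _ p))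

variable (hd : StrictMono d)
include hd

lemma length_eq_of_apply_eq {σ τ : List β} (h : f σ = f τ) : σ.length = τ.length :=
  hd.injective (by rw [← hf.lvl_eq, ← hf.lvl_eq, h])

lemma injective : Function.Injective f := by
  intro σ τ h
  induction σ using reverseRecOn generalizing τ with
  | nil => exact (eq_nil_of_length_eq_zero (hf.length_eq_of_apply_eq hd h).symm).symm
  | append_singleton σ p ih =>
    obtain ⟨τ, q, rfl⟩ : ∃ τ' q, τ = τ' ++ [q] := by
      rcases τ.eq_nil_or_concat with rfl | ⟨τ', q, rfl⟩
      · simpa using hf.length_eq_of_apply_eq hd h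
      · exact ⟨τ', q, concat_eq_append⟩
    have hlen : σ.length = τ.length := by simpa using hf.length_eq_of_apply_eq hd h
    obtain rfl : σ = τ := ih <| eq_of_prefix_of_lvl_eq (hf.mem σ) (hf.mem τ)
      (hf.apply_prefix_apply (prefix_append σ [p]))
      (h ▸ hf.apply_prefix_apply (prefix_append τ [q]))
      (by rw [hf.lvl_eq, hf.lvl_eq, hlen])
    rw [eq_of_append_singleton_prefix (hf.append_singleton_prefix σ p)
      (h ▸ hf.append_singleton_prefix σ q)]

lemma apply_prefix_apply_iff {σ τ : List β} : f σ <+: f τ ↔ σ <+: τ := by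
  refine ⟨fun h => ?_, hf.apply_prefix_apply⟩
  have hlen : σ.length ≤ τ.length := by
    simpa [hf.lvl_eq, hd.le_iff_le] using lvl_le_lvl (hf.mem σ) h
  have : f σ = f (τ.take σ.length) := eq_of_prefix_of_lvl_eq (hf.mem _) (hf.mem _) h
    (hf.apply_prefix_apply (take_prefix _ τ)) (by simp [hf.lvl_eq, hlen])
  exact prefix_iff_eq_take.mpr (hf.injective hd this)

lemma plt_apply_iff {σ τ : List β} : PLt (f σ) (f τ) ↔ PLt σ τ :=
  and_congr (hf.apply_prefix_apply_iff hd) (hf.injective hd).ne_iff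

variable {m : ℕ}

lemma lvl_image_apply {σ : List β} (hσ : σ.length < m) :
    lvl (f '' {σ | σ.length < m}) (f σ) = σ.length := by
  have : {x ∈ f '' {σ | σ.length < m} | PLt x (f σ)} = f '' {ρ | PLt ρ σ} := by
    ext x
    constructor
    · rintro ⟨⟨ρ, -, rfl⟩, h⟩
      exact ⟨ρ, (hf.plt_apply_iff hd).mp h, rfl⟩
    · rintro ⟨ρ, h, rfl⟩
      exact ⟨⟨ρ, h.length_lt.trans hσ, rfl⟩, (hf.plt_apply_iff hd).mpr h⟩
  rw [lvl, this, (hf.injective hd).injOn.ncard_image, ncard_setOf_plt]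

lemma immSuc_image_apply_append_singleton {σ : List β} (hσ : σ.length + 1 < m) (p : β) :
    ImmSuc (f '' {σ | σ.length < m}) (f σ) (f (σ ++ [p])) := by
  refine ⟨⟨σ, show σ.length < m by omega, rfl⟩, ⟨σ ++ [p], by simpa using hσ, rfl⟩,
    (hf.plt_apply_iff hd).mpr (plt_append_singleton σ p), ?_⟩
  rintro ⟨_, ⟨ρ, -, rfl⟩, h₁, h₂⟩
  have := ((hf.plt_apply_iff hd).mp h₁).length_lt
  have := ((hf.plt_apply_iff hd).mp h₂).length_lt
  simp only [length_append, length_singleton] at this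
  omega

lemma exists_eq_of_immSuc_image {σ : List β} {y : List β}
    (hy : ImmSuc (f '' {σ | σ.length < m}) (f σ) y) : ∃ p, y = f (σ ++ [p]) := by
  obtain ⟨-, ⟨ρ, hρ, rfl⟩, hσρ, hnone⟩ := hy
  obtain ⟨p, hp⟩ := ((hf.plt_apply_iff hd).mp hσρ).exists_append_singleton_prefix
  refine ⟨p, congrArg f (antisymm ?_ hp)⟩
  by_contra hne
  exact hnone ⟨f (σ ++ [p]), ⟨σ ++ [p], hp.length_le.trans_lt hρ, rfl⟩,
    (hf.plt_apply_iff hd).mpr (plt_append_singleton σ p),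
    (hf.plt_apply_iff hd).mpr ⟨hp, fun h => hne (h ▸ prefix_rfl)⟩⟩

lemma succCond_image (hT : IsStrongSubtreeInf Set.univ T) :
    SuccCond T (f '' {σ | σ.length < m}) := by
  rintro _ ⟨σ, -, rfl⟩ ⟨_, ⟨ρ, hρ, rfl⟩, hσρ⟩ t ht
  have hσ : σ.length + 1 < m := by
    have : ρ.length < m := hρ
    have := ((hf.plt_apply_iff hd).mp hσρ).length_lt
    omega
  obtain ⟨p, hp⟩ := ht.2.2.1.exists_append_singleton_prefix
  refine ⟨f (σ ++ [p]), ⟨hf.immSuc_image_apply_append_singleton hd hσ p,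
    ImmSuc.prefix_of_append_singleton_prefix hT ht hp (hf.mem _)
      (hf.append_singleton_prefix σ p)⟩, ?_⟩
  rintro y ⟨hy, hty⟩
  obtain ⟨q, rfl⟩ := hf.exists_eq_of_immSuc_image hd hy
  rw [eq_of_append_singleton_prefix (hp.trans hty) (hf.append_singleton_prefix σ q)]

lemma levelsAligned_image : LevelsAligned T (f '' {σ | σ.length < m}) := by
  rintro _ ⟨σ, hσ, rfl⟩ _ ⟨τ, hτ, rfl⟩ h
  rw [hf.lvl_image_apply hd hσ, hf.lvl_image_apply hd hτ] at h
  rw [hf.lvl_eq, hf.lvl_eq, h]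

lemma exists_length_eq_forall_prefix_apply [Nonempty β] {C : Set (List β)}
    (hCS : C ⊆ f '' {σ | σ.length < m}) (hchain : ∀ x ∈ C, ∀ y ∈ C, x <+: y ∨ y <+: x) :
    ∃ τ : List β, τ.length = m - 1 ∧ ∀ x ∈ C, x <+: f τ := by
  rcases C.eq_empty_or_nonempty with rfl | hC
  · exact ⟨replicate (m - 1) (Classical.arbitrary β), length_replicate, by simp⟩
  have hCfin : C.Finite := by
    refine Set.Finite.of_finite_image (f := lvl (f '' {σ | σ.length < m}))
      ((Set.finite_Iio m).subset ?_) fun x hx y hy h => ?_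
    · rintro _ ⟨x, hx, rfl⟩
      obtain ⟨σ, hσ, rfl⟩ := hCS hx
      rw [Set.mem_Iio, hf.lvl_image_apply hd hσ]
      exact hσ
    · rcases hchain x hx y hy with hxy | hyx
      · exact eq_of_prefix_of_lvl_eq (hCS hx) (hCS hy) hxy prefix_rfl h
      · exact eq_of_prefix_of_lvl_eq (hCS hx) (hCS hy) prefix_rfl hyx h
  obtain ⟨_, hx, hmaxlen⟩ := Set.exists_max_image C length hCfin hC
  obtain ⟨σ, hσ, rfl⟩ := hCS hx
  have hσ : σ.length < m := hσ
  refine ⟨σ ++ replicate (m - 1 - σ.length) (Classical.arbitrary β), by simp; omega,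
    fun y hy => ?_⟩
  refine (?_ : y <+: f σ).trans (hf.apply_prefix_apply (prefix_append _ _))
  rcases hchain y hy _ hx with h | h
  · exact h
  · rw [h.eq_of_length (h.length_le.antisymm (hmaxlen y hy))]

/-- A maximal chain `C` of the image lies below the image of some `τ` of length `m - 1`, so by
maximality it consists of the images of all prefixes of `τ`. -/
lemma balancedOfHeight_image [Nonempty β] (hm : 0 < m) :
    BalancedOfHeight (f '' {σ | σ.length < m}) m := by
  rintro C ⟨hCS, hchain, hmax⟩
  obtain ⟨τ, hτ, hCτ⟩ := hf.exists_length_eq_forall_prefix_apply hd hCS hchain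
  have hC : C = f '' {ρ | ρ <+: τ} := by
    refine (hmax _ (fun x hx => ?_) ?_ ?_).symm
    · obtain ⟨ρ, -, rfl⟩ := hCS hx
      exact ⟨ρ, (hf.apply_prefix_apply_iff hd).mp (hCτ _ hx), rfl⟩
    · rintro _ ⟨ρ, hρ, rfl⟩
      exact ⟨ρ, show ρ.length < m by have := hρ.length_le; omega, rfl⟩
    · rintro _ ⟨ρ, hρ, rfl⟩ _ ⟨ρ', hρ', rfl⟩
      rcases prefix_or_prefix_of_prefix hρ hρ' with h | h
      exacts [Or.inl (hf.apply_prefix_apply h), Or.inr (hf.apply_prefix_apply h)]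
  subst hC
  refine ⟨(setOf_prefix_finite τ).image f, ?_⟩
  rw [(hf.injective hd).injOn.ncard_image, ncard_setOf_prefix]
  omega

lemma isStrongSubtreeFin_image [Nonempty β] (hT : IsStrongSubtreeInf Set.univ T) (hm : 0 < m) :
    IsStrongSubtreeFin T (f '' {σ | σ.length < m}) m := by
  have hroot : f [] ∈ f '' {σ | σ.length < m} := ⟨[], hm, rfl⟩
  refine ⟨?_, ⟨_, hroot⟩, ⟨_, hroot, ?_⟩, hf.balancedOfHeight_image hd hm,
    hf.levelsAligned_image hd, hf.succCond_image hd hT⟩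
  · rintro _ ⟨σ, -, rfl⟩
    exact hf.mem σ
  · rintro _ ⟨σ, -, rfl⟩
    exact hf.apply_prefix_apply σ.nil_prefix

end IsLevelEmbedding

section Construction

variable {T : Set (List β)}

noncomputable def rootNode (T : Set (List β)) (A : Finset (List β)) (e : ℕ) : List β :=
  Classical.epsilon fun v => v ∈ T ∧ lvl T v = e ∧ ∀ a ∈ A, v <+: a

noncomputable def nextNode (T : Set (List β)) (A : Finset (List β)) (u : List β) (e : ℕ)
    (p : β) : List β :=
  Classical.epsilon fun v => v ∈ T ∧ u ++ [p] <+: v ∧ lvl T v = e ∧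
    ∀ a ∈ A, u ++ [p] <+: a → e ≤ lvl T a → v <+: a

/-- Recursion on the reversed word, so that `embed (σ ++ [p])` is computed from `embed σ`. -/
noncomputable def embedRev (T : Set (List β)) (A : Finset (List β)) (d : ℕ → ℕ) :
    List β → List β
  | [] => rootNode T A (d 0)
  | p :: σ => nextNode T A (embedRev T A d σ) (d (σ.length + 1)) p

noncomputable def embed (T : Set (List β)) (A : Finset (List β)) (d : ℕ → ℕ) (σ : List β) :
    List β :=
  embedRev T A d σ.reverse

lemma embed_append_singleton (A : Finset (List β)) (d : ℕ → ℕ) (σ : List β) (p : β) :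
    embed T A d (σ ++ [p]) = nextNode T A (embed T A d σ) (d (σ.length + 1)) p := by
  simp [embed, embedRev]

variable [DecidableEq β]

lemma prefix_of_lvl_le_lvl_lcp {v a a' : List β} (hv : v ∈ T) (hva : v <+: a)
    (hmeet : lcp a a' ∈ T) (h : lvl T v ≤ lvl T (lcp a a')) : v <+: a' := by
  obtain ⟨w, hw, hwm, hlw⟩ := exists_prefix_lvl_eq hmeet h
  rw [eq_of_prefix_of_lvl_eq hv hw hva (hwm.trans (lcp_prefix_left a a')) hlw.symm]
  exact hwm.trans (lcp_prefix_right a a')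

variable {A : Finset (List β)} (hA : ↑A ⊆ T)
  (hAlcp : ∀ a ∈ A, ∀ a' ∈ A, lcp a a' ∈ A)
include hA hAlcp

lemma rootNode_spec (hne : A.Nonempty) {e : ℕ} (he : ∀ a ∈ A, e ≤ lvl T a) :
    rootNode T A e ∈ T ∧ lvl T (rootNode T A e) = e ∧ ∀ a ∈ A, rootNode T A e <+: a := by
  refine Classical.epsilon_spec (p := fun v => v ∈ T ∧ lvl T v = e ∧ ∀ a ∈ A, v <+: a) ?_
  obtain ⟨a₀, ha₀⟩ := hne
  obtain ⟨v, hv, hva₀, rfl⟩ := exists_prefix_lvl_eq (hA ha₀) (he a₀ ha₀)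
  exact ⟨v, hv, rfl, fun a ha =>
    prefix_of_lvl_le_lvl_lcp hv hva₀ (hA (hAlcp _ ha₀ _ ha)) (he _ (hAlcp _ ha₀ _ ha))⟩

/-- If no level of `A` lies strictly between the levels of `u` and `e`, then the elements of `A`
through direction `p` above `u` that reach level `e` all share their node at level `e`, because
their meets lie in `A` above `u`. -/
lemma nextNode_spec (hT : IsStrongSubtreeInf Set.univ T) {u : List β} (hu : u ∈ T) {e : ℕ}
    (he : lvl T u < e) (hgap : ∀ a ∈ A, lvl T u < lvl T a → e ≤ lvl T a) (p : β) :
    nextNode T A u e p ∈ T ∧ u ++ [p] <+: nextNode T A u e p ∧ lvl T (nextNode T A u e p) = e ∧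
      ∀ a ∈ A, u ++ [p] <+: a → e ≤ lvl T a → nextNode T A u e p <+: a := by
  refine Classical.epsilon_spec (p := fun v => v ∈ T ∧ u ++ [p] <+: v ∧ lvl T v = e ∧
    ∀ a ∈ A, u ++ [p] <+: a → e ≤ lvl T a → v <+: a) ?_
  by_cases h : ∃ a₀ ∈ A, u ++ [p] <+: a₀ ∧ e ≤ lvl T a₀
  · obtain ⟨a₀, ha₀, hua₀, hea₀⟩ := h
    obtain ⟨v, hv, hva₀, rfl⟩ := exists_prefix_lvl_eq (hA ha₀) hea₀
    refine ⟨v, hv, append_singleton_prefix_of_plt hua₀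
      (plt_of_lvl_lt hv ((prefix_append u [p]).trans hua₀) hva₀ he) hva₀, rfl,
      fun a ha hua _ => prefix_of_lvl_le_lvl_lcp hv hva₀ (hA (hAlcp _ ha₀ _ ha)) ?_⟩
    refine hgap _ (hAlcp _ ha₀ _ ha) (lvl_lt_lvl hu ?_)
    exact (plt_append_singleton u p).trans_prefix (prefix_lcp hua₀ hua)
  · obtain ⟨v, hv, huv, hlv⟩ := exists_append_singleton_prefix_lvl_eq hT hu he p
    exact ⟨v, hv, huv, hlv, fun a ha hua hea => absurd ⟨a, ha, hua, hea⟩ h⟩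

variable {d : ℕ → ℕ} (hd : StrictMono d) (hAd : ∀ a ∈ A, ∃ i, lvl T a = d i)
include hd hAd

lemma embed_nil_spec (hne : A.Nonempty) :
    embed T A d [] ∈ T ∧ lvl T (embed T A d []) = d 0 ∧ ∀ a ∈ A, embed T A d [] <+: a :=
  rootNode_spec hA hAlcp hne fun a ha => (hAd a ha).elim fun i hi => hi ▸ hd.monotone i.zero_le

lemma embed_append_singleton_spec (hT : IsStrongSubtreeInf Set.univ T) {σ : List β}
    (hσ : embed T A d σ ∈ T) (hlvl : lvl T (embed T A d σ) = d σ.length) (p : β) :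
    embed T A d (σ ++ [p]) ∈ T ∧ embed T A d σ ++ [p] <+: embed T A d (σ ++ [p]) ∧
      lvl T (embed T A d (σ ++ [p])) = d (σ ++ [p]).length ∧
      ∀ a ∈ A, embed T A d σ ++ [p] <+: a → d (σ.length + 1) ≤ lvl T a →
        embed T A d (σ ++ [p]) <+: a := by
  rw [embed_append_singleton, length_append, length_singleton]
  refine nextNode_spec hA hAlcp hT hσ (hlvl ▸ hd (Nat.lt_succ_self _)) (fun a ha h => ?_) p
  obtain ⟨i, hi⟩ := hAd a ha
  rw [hlvl, hi] at h
  rw [hi]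
  exact hd.monotone (hd.lt_iff_lt.mp h)

lemma isLevelEmbedding_embed (hT : IsStrongSubtreeInf Set.univ T) (hne : A.Nonempty) :
    IsLevelEmbedding T d (embed T A d) := by
  have h : ∀ σ, embed T A d σ ∈ T ∧ lvl T (embed T A d σ) = d σ.length := by
    intro σ
    induction σ using reverseRecOn with
    | nil => exact (embed_nil_spec hA hAlcp hd hAd hne).imp_right And.left
    | append_singleton σ p ih =>
      obtain ⟨hmem, -, hlvl, -⟩ := embed_append_singleton_spec hA hAlcp hd hAd hT ih.1 ih.2 p
      exact ⟨hmem, hlvl⟩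
  exact ⟨fun σ => (h σ).1, fun σ => (h σ).2, fun σ p =>
    (embed_append_singleton_spec hA hAlcp hd hAd hT (h σ).1 (h σ).2 p).2.1⟩

/-- Following the directions of `a ∈ A` from the root, the embedding passes through the node
of `a` at every level `d j`, because `nextNode` stays below the elements of `A`. -/
lemma exists_embed_eq (hT : IsStrongSubtreeInf Set.univ T) (hne : A.Nonempty) {a : List β}
    (ha : a ∈ A) {i : ℕ} (hi : lvl T a = d i) : ∃ σ : List β, σ.length = i ∧ embed T A d σ = a := by
  have hf := isLevelEmbedding_embed hA hAlcp hd hAd hT hne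
  have hpath : ∀ j ≤ i, ∃ σ : List β, σ.length = j ∧ embed T A d σ <+: a := by
    intro j hj
    induction j with
    | zero => exact ⟨[], rfl, (embed_nil_spec hA hAlcp hd hAd hne).2.2 a ha⟩
    | succ j ih =>
      obtain ⟨σ, rfl, hσa⟩ := ih (by omega)
      have hlt : lvl T (embed T A d σ) < lvl T a := by
        rw [hf.lvl_eq, hi]
        exact hd (by omega)
      obtain ⟨p, hp⟩ := (plt_of_lvl_lt (hA ha) hσa prefix_rfl hlt).exists_append_singleton_prefix
      exact ⟨σ ++ [p], by simp, (embed_append_singleton_spec hA hAlcp hd hAd hT (hf.mem σ)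
        (hf.lvl_eq σ) p).2.2.2 a ha hp (hi ▸ hd.monotone hj)⟩
  obtain ⟨σ, rfl, hσa⟩ := hpath i le_rfl
  exact ⟨σ, rfl, eq_of_prefix_of_lvl_eq (hf.mem σ) (hA ha) hσa prefix_rfl (by rw [hf.lvl_eq, hi])⟩

end Construction

end StrongSubtree

open StrongSubtree

theorem stmt9 (b n : ℕ) (hb : 2 ≤ b) (hn : 1 ≤ n)
    (T : Set (List (Fin b))) (hT : IsStrongSubtreeInf Set.univ T)
    (F : Set (List (Fin b))) (hFT : F ⊆ T) (hFfin : F.Finite) (hFcard : F.ncard = n) :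
    ∃ S, IsStrongSubtreeFin T S (2 * n - 1) ∧ F ⊆ S := by
  classical
  have : Nonempty (Fin b) := ⟨⟨0, by omega⟩⟩
  lift F to Finset (List (Fin b)) using hFfin
  rw [Set.ncard_coe_finset] at hFcard
  have hne : F.Nonempty := Finset.card_pos.mp (by omega)
  set A := meetClosure F
  have hA : ↑A ⊆ T := coe_meetClosure_subset hT hFT
  have hAlcp : ∀ a ∈ A, ∀ a' ∈ A, lcp a a' ∈ A := fun _ ha _ ha' => lcp_mem_meetClosure ha ha'
  have hAne : A.Nonempty := hne.mono (subset_meetClosure F)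
  obtain ⟨d, hd, hdA⟩ := exists_strictMono_enum (A.image (lvl T))
  have hAlvl : ∀ a ∈ A, ∃ i < 2 * n - 1, lvl T a = d i := fun a ha =>
    (hdA _ (Finset.mem_image_of_mem _ ha)).imp fun _ ⟨hi, h⟩ =>
      ⟨hi.trans_le (Finset.card_image_le.trans (hFcard ▸ card_meetClosure_le hne)), h⟩
  have hAd : ∀ a ∈ A, ∃ i, lvl T a = d i := fun a ha => (hAlvl a ha).imp fun _ h => h.2
  have hf := isLevelEmbedding_embed hA hAlcp hd hAd hT hAne
  refine ⟨_, hf.isStrongSubtreeFin_image hd hT (by omega), fun x hx => ?_⟩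
  obtain ⟨i, hi, hxi⟩ := hAlvl x (subset_meetClosure F hx)
  obtain ⟨σ, rfl, hσ⟩ := exists_embed_eq hA hAlcp hd hAd hT hAne (subset_meetClosure F hx) hxi
  exact ⟨σ, hi, hσ⟩
end

section
/- For every integer n ≥ 2, the set A_n = {0^{2i}1 : 1 ≤ i ≤ n} ⊆ 2^{<ℕ} (where 0^{2i}1 is the sequence of 2i zeros followed by a one) has cardinality n, and every strong subtree S of 2^{<ℕ} containing A_n has height at least 2n − 1. -/
/-!
Two facts about a strong subtree `S` of the full tree of finite sequences make the bound work.
Its levels are aligned with those of the full tree, so nodes of different lengths lie on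
different levels of `S`, and there are fewer than `h` levels since every node lies on a maximal
chain. Its successor condition makes it closed under meets: if the longest node `u` of `S` below
the meet `m` of two nodes `s, t` were not `m`, the immediate successors of `u` in `S` towards `s`
and towards `t` would both extend the successor of `u` towards `m`, hence coincide and lie below
`m`. So `S ⊇ {0^{2i}1 : 1 ≤ i ≤ n}` also contains the meets `0^{2i}`, `i < n`, which gives nodes
of the `2n - 1` lengths `2, …, 2n - 1, 2n + 1`.
-/

section StrongSubtree

variable {β : Type*} {S : Set (List β)}

lemma PLt.length_lt_s10 {s t : List β} (h : PLt s t) : s.length < t.length :=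
  lt_of_le_of_ne h.1.length_le fun he => h.2 (h.1.eq_of_length he)

lemma List.IsPrefix.pLt_of_length_lt {s t : List β} (h : s <+: t) (hlt : s.length < t.length) :
    PLt s t :=
  ⟨h, by rintro rfl; exact lt_irrefl _ hlt⟩

lemma PLt.trans {s t u : List β} (hst : PLt s t) (htu : PLt t u) : PLt s u :=
  (hst.1.trans htu.1).pLt_of_length_lt (hst.length_lt_s10.trans htu.length_lt_s10)

lemma finite_setOf_prefix (t : List β) : {w : List β | w <+: t}.Finite :=
  t.inits.finite_toSet.subset fun w hw => (List.mem_inits w t).2 hw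

lemma lvl_univ (t : List β) : lvl Set.univ t = t.length := by
  have himage : {s ∈ (Set.univ : Set (List β)) | PLt s t} = (t.take ·) '' Set.Iio t.length := by
    ext s
    simp only [Set.mem_univ, true_and, Set.mem_ofPred_eq, Set.mem_image, Set.mem_Iio]
    constructor
    · exact fun h => ⟨s.length, h.length_lt_s10, (List.prefix_iff_eq_take.1 h.1).symm⟩
    · rintro ⟨k, hk, rfl⟩
      exact (List.take_prefix k t).pLt_of_length_lt (by simp [hk])
  have hinj : Set.InjOn (t.take ·) (Set.Iio t.length) := fun a ha b hb he => by
    simpa [Set.mem_Iio.1 ha |>.le, Set.mem_Iio.1 hb |>.le] using congrArg List.length he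
  rw [lvl, himage, hinj.ncard_image, ← Finset.coe_range, Set.ncard_coe_finset,
    Finset.card_range]

lemma BalancedOfHeight.lvl_lt {h : ℕ} (hb : BalancedOfHeight S h) {s : List β} (hs : s ∈ S) :
    lvl S s < h := by
  -- the prefix order restricted to `S`, so that a maximal chain through `s` stays inside `S`
  let r : List β → List β → Prop := fun a b => a ∈ S ∧ b ∈ S ∧ a <+: b
  set P := {w ∈ S | PLt w s}
  have hchain : IsChain r (insert s P) := by
    have hbelow : ∀ c ∈ insert s P, c ∈ S ∧ c <+: s := by
      rintro c (rfl | hc)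
      exacts [⟨hs, List.prefix_refl _⟩, ⟨hc.1, hc.2.1⟩]
    intro a ha b hb _
    obtain ⟨haS, has⟩ := hbelow a ha
    obtain ⟨hbS, hbs⟩ := hbelow b hb
    exact (List.prefix_or_prefix_of_prefix has hbs).imp (⟨haS, hbS, ·⟩) (⟨hbS, haS, ·⟩)
  obtain ⟨M, hM, hPM⟩ := hchain.exists_maxChain
  have hMS : M ⊆ S := fun x hx => by
    by_cases hxs : x = s
    · exact hxs ▸ hs
    · rcases hM.1 hx (hPM (Set.mem_insert s P)) hxs with h | h
      exacts [h.1, h.2.1]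
  have hMmax : MaxChainIn S M := by
    refine ⟨hMS, fun a ha b hb => ?_, fun C hMC hCS hC => (hM.2 ?_ hMC).symm⟩
    · obtain rfl | hab := eq_or_ne a b
      · exact Or.inl (List.prefix_refl a)
      · exact (hM.1 ha hb hab).imp (·.2.2) (·.2.2)
    · exact fun a ha b hb _ => (hC a ha b hb).imp (⟨hCS ha, hCS hb, ·⟩) (⟨hCS hb, hCS ha, ·⟩)
  obtain ⟨hMfin, hMcard⟩ := hb M hMmax
  calc lvl S s < (insert s P).ncard := by
        rw [Set.ncard_insert_of_notMem (fun h => h.2.2 rfl)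
          ((hMfin.subset hPM).subset (Set.subset_insert s P))]
        exact Nat.lt_succ_self _
    _ ≤ M.ncard := Set.ncard_le_ncard hPM hMfin
    _ = h := hMcard

lemma exists_immSuc_prefix {u x : List β} (hu : u ∈ S) (hx : x ∈ S) (hux : PLt u x) :
    ∃ v, ImmSuc S u v ∧ v <+: x := by
  obtain ⟨v, ⟨hvS, huv, hvx⟩, hmin⟩ := Set.Finite.exists_minimalFor List.length
    {w ∈ S | PLt u w ∧ w <+: x} ((finite_setOf_prefix x).subset fun w hw => hw.2.2)
    ⟨x, hx, hux, List.prefix_refl x⟩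
  refine ⟨v, ⟨hu, hvS, huv, ?_⟩, hvx⟩
  rintro ⟨w, hwS, huw, hwv⟩
  exact absurd (hmin ⟨hwS, huw, hwv.1.trans hvx⟩ hwv.length_lt_s10.le) (not_le.2 hwv.length_lt_s10)

lemma immSuc_univ_take {u m : List β} (hum : PLt u m) :
    ImmSuc Set.univ u (m.take (u.length + 1)) := by
  have hlen : (m.take (u.length + 1)).length = u.length + 1 := by
    have := hum.length_lt_s10
    simp only [List.length_take]
    omega
  refine ⟨trivial, trivial, ?_, fun ⟨w, _, huw, hwt⟩ => ?_⟩
  · exact (List.prefix_take_iff.2 ⟨hum.1, by omega⟩).pLt_of_length_lt (by omega)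
  · have := huw.length_lt_s10
    have := hwt.length_lt_s10
    omega

theorem mem_of_isMeet_of_succCond (hroot : UniquelyRooted S) (hsucc : SuccCond Set.univ S)
    {s t m : List β} (hs : s ∈ S) (ht : t ∈ S) (hms : PLt m s) (hmt : PLt m t)
    (hmeet : ∀ w, w <+: s → w <+: t → w <+: m) : m ∈ S := by
  obtain ⟨r, hrS, hr⟩ := hroot
  obtain ⟨u, ⟨huS, hum⟩, humax⟩ := Set.Finite.exists_maximalFor List.length {w ∈ S | w <+: m}
    ((finite_setOf_prefix m).subset fun w hw => hw.2) ⟨r, hrS, hmeet r (hr s hs) (hr t ht)⟩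
  by_contra hmS
  have hum : PLt u m := ⟨hum, by rintro rfl; exact hmS huS⟩
  set m₁ := m.take (u.length + 1)
  have htoward : ∀ x ∈ S, PLt m x → ∃ v, (ImmSuc S u v ∧ m₁ <+: v) ∧ v <+: x := by
    intro x hx hmx
    obtain ⟨v, hv, hvx⟩ := exists_immSuc_prefix huS hx (hum.trans hmx)
    refine ⟨v, ⟨hv, List.prefix_of_prefix_length_le ((List.take_prefix _ _).trans hmx.1) hvx ?_⟩,
      hvx⟩
    have := hv.2.2.1.length_lt_s10
    simp only [m₁, List.length_take]
    omega
  obtain ⟨v, hv, hvs⟩ := htoward s hs hms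
  obtain ⟨v', hv', hv't⟩ := htoward t ht hmt
  obtain rfl : v = v' :=
    (hsucc u huS ⟨s, hs, hum.trans hms⟩ m₁ (immSuc_univ_take hum)).unique hv hv'
  have hlt := hv.1.2.2.1.length_lt_s10
  exact absurd (humax ⟨hv.1.2.1, hmeet v hvs hv't⟩ hlt.le) (not_le.2 hlt)

theorem card_le_of_forall_exists_length_eq {h : ℕ} (hb : BalancedOfHeight S h)
    (halign : LevelsAligned Set.univ S) {D : Finset ℕ} (hD : ∀ k ∈ D, ∃ s ∈ S, s.length = k) :
    D.card ≤ h := by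
  choose! node hnodeS hnode_len using hD
  calc D.card ≤ (Finset.range h).card := by
        refine Finset.card_le_card_of_injOn (fun k => lvl S (node k))
          (fun k hk => Finset.mem_range.2 (hb.lvl_lt (hnodeS k hk))) fun a ha b hb' he => ?_
        have := halign _ (hnodeS a ha) _ (hnodeS b hb') he
        rwa [lvl_univ, lvl_univ, hnode_len a ha, hnode_len b hb'] at this
    _ = h := Finset.card_range h

lemma List.prefix_replicate_of_prefix_replicate_append {a b : β} (hab : a ≠ b)
    {k l : ℕ} (hkl : k < l) {w : List β} (hk : w <+: replicate k a ++ [b])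
    (hl : w <+: replicate l a ++ [b]) : w <+: replicate k a := by
  rcases le_or_gt w.length k with hw | hw
  · exact List.prefix_of_prefix_length_le hk (List.prefix_append _ _) (by simpa using hw)
  · have hlen : w.length = (replicate k a ++ [b]).length := by
      have := hk.length_le
      simp only [length_append, length_replicate, length_singleton] at this ⊢
      omega
    obtain rfl := hk.eq_of_length hlen
    obtain ⟨d, rfl⟩ := Nat.exists_eq_add_of_lt hkl
    rw [add_assoc, replicate_add, replicate_succ, append_assoc, prefix_append_right_inj,
      cons_append, cons_prefix_cons] at hl
    exact absurd hl.1.symm hab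

end StrongSubtree

theorem stmt10_general (n : ℕ) :
    ((fun i : ℕ => List.replicate (2 * i) (0 : Fin 2) ++ [(1 : Fin 2)]) ''
        Set.Icc 1 n).ncard = n ∧
      ∀ (S : Set (List (Fin 2))) (h : ℕ), IsStrongSubtreeFin Set.univ S h →
        ((fun i : ℕ => List.replicate (2 * i) (0 : Fin 2) ++ [(1 : Fin 2)]) ''
            Set.Icc 1 n) ⊆ S →
        2 * n - 1 ≤ h := by
  constructor
  · rw [Set.InjOn.ncard_image fun a _ b _ he => by simpa using congrArg List.length he,
      ← Finset.coe_Icc, Set.ncard_coe_finset, Nat.card_Icc, Nat.add_sub_cancel]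
  · rintro S h ⟨-, -, hroot, hbal, halign, hsucc⟩ hA
    have hspine : ∀ i ∈ Set.Icc 1 n, List.replicate (2 * i) (0 : Fin 2) ++ [1] ∈ S :=
      fun i hi => hA ⟨i, hi, rfl⟩
    have hzeros : ∀ i, 1 ≤ i → i < n → List.replicate (2 * i) (0 : Fin 2) ∈ S := fun i h1 h2 =>
      mem_of_isMeet_of_succCond hroot hsucc (hspine i ⟨h1, h2.le⟩) (hspine n ⟨by omega, le_rfl⟩)
        ((List.prefix_append _ _).pLt_of_length_lt (by simp))
        (List.IsPrefix.pLt_of_length_lt ⟨List.replicate (2 * n - 2 * i) 0 ++ [1], by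
            rw [← List.append_assoc, ← List.replicate_add, Nat.add_sub_cancel' (by omega)]⟩
          (by simp only [List.length_replicate, List.length_append, List.length_singleton]; omega))
        fun w => List.prefix_replicate_of_prefix_replicate_append (by decide) (by omega)
    calc 2 * n - 1 ≤ ((Finset.Icc 2 (2 * n + 1)).erase (2 * n)).card := by
          simpa using Finset.pred_card_le_card_erase (s := Finset.Icc 2 (2 * n + 1)) (a := 2 * n)
      _ ≤ h := card_le_of_forall_exists_length_eq hbal halign fun k hk => by
          simp only [Finset.mem_erase, Finset.mem_Icc] at hk
          obtain ⟨j, rfl | rfl⟩ := Nat.even_or_odd' k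
          · exact ⟨_, hzeros j (by omega) (by omega), by simp⟩
          · exact ⟨_, hspine j ⟨by omega, by omega⟩, by simp⟩

theorem stmt10 (n : ℕ) (hn : 2 ≤ n) :
    ((fun i : ℕ => List.replicate (2 * i) (0 : Fin 2) ++ [(1 : Fin 2)]) ''
        Set.Icc 1 n).ncard = n ∧
      ∀ (S : Set (List (Fin 2))) (h : ℕ), IsStrongSubtreeFin Set.univ S h →
        ((fun i : ℕ => List.replicate (2 * i) (0 : Fin 2) ++ [(1 : Fin 2)]) ''
            Set.Icc 1 n) ⊆ S →
        2 * n - 1 ≤ h :=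
  stmt10_general n
end

section
/- Let T be a homogeneous tree and let F ⊆ T with |F| = k ≥ 3. Then F is a free subset of T if and only if there is an enumeration {t₁,…,t_k} of F such that ℓ(t₁) < ⋯ < ℓ(t_{k−1}) ≤ ℓ(t_k) and for every m ∈ {1,…,k−2}, ℓ(t_m) < ℓ(∧{t_{m+1},…,t_k}). -/
/-- `w` is the infimum (longest common initial segment) of the set `G` of nodes. -/
def IsInfList {β : Type*} (G : Set (List β)) (w : List β) : Prop :=
  (∀ t ∈ G, w <+: t) ∧ ∀ v, (∀ t ∈ G, v <+: t) → v <+: w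

open Classical in
/-- The infimum (longest common initial segment) of a set of nodes. -/
noncomputable def infNode {β : Type*} (G : Set (List β)) : List β :=
  if h : ∃ w, IsInfList G w then h.choose else []

/-- The families `Free_k(T)` of free subsets of `T`, defined recursively:
`Free₁(T)` consists of singletons, `Free₂(T)` of doubletons, and
`F ∈ Free_{k+1}(T)` iff `F = {t} ∪ G` with `G ∈ Free_k(T)`, `t ∈ T` and
`ℓ(t) < ℓ(∧G)`. -/
inductive FreeK {b : ℕ} (T : Set (List (Fin b))) : ℕ → Finset (List (Fin b)) → Prop
  | single (t : List (Fin b)) (ht : t ∈ T) : FreeK T 1 {t}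
  | pair (s t : List (Fin b)) (hs : s ∈ T) (ht : t ∈ T) (hst : s ≠ t) :
      FreeK T 2 {s, t}
  | step (k : ℕ) (hk : 2 ≤ k) (t : List (Fin b)) (ht : t ∈ T)
      (G : Finset (List (Fin b))) (hG : FreeK T k G)
      (hlen : t.length < (infNode (G : Set (List (Fin b)))).length) :
      FreeK T (k + 1) (insert t G)

/-- `F` is a free subset of `T`. -/
def IsFreeSet {b : ℕ} (T : Set (List (Fin b))) (F : Finset (List (Fin b))) : Prop :=
  ∃ k, FreeK T k F

/-!
Unwinding the recursion, `F ∈ Free_k(T)` says exactly that `F` can be listed as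
`t₁, …, t_k` where `{t_{k-1}, t_k}` is the initial doubleton and each `t_m` with `m ≤ k - 2`
is added below the infimum of `t_{m+1}, …, t_k`. The chain `ℓ(t₁) < ⋯ < ℓ(t_{k-1})` then comes
for free, since `ℓ(∧G) ≤ ℓ(t)` for every `t ∈ G`.
-/

section Infimum

variable {β : Type*}

lemma exists_isInfList {G : Set (List β)} (hG : G.Nonempty) : ∃ w, IsInfList G w := by
  classical
  obtain ⟨t₀, ht₀⟩ := hG
  set P : ℕ → Prop := fun m => ∀ t ∈ G, t₀.take m <+: t
  have hP0 : P 0 := fun t _ => by simp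
  set n := Nat.findGreatest P t₀.length
  refine ⟨t₀.take n, Nat.findGreatest_spec (Nat.zero_le _) hP0, fun v hv => ?_⟩
  have hveq : v = t₀.take v.length := List.prefix_iff_eq_take.mp (hv t₀ ht₀)
  have hPv : P v.length := fun t ht => hveq ▸ hv t ht
  rw [hveq]
  exact List.take_prefix_take_left (Nat.le_findGreatest (hv t₀ ht₀).length_le hPv)

lemma isInfList_infNode {G : Set (List β)} (hG : G.Nonempty) : IsInfList G (infNode G) := by
  have h := exists_isInfList hG
  rw [infNode, dif_pos h]
  exact h.choose_spec

lemma length_infNode_le {G : Set (List β)} {t : List β} (ht : t ∈ G) :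
    (infNode G).length ≤ t.length :=
  ((isInfList_infNode ⟨t, ht⟩).1 t ht).length_le

end Infimum

/-- The final segment `t a, …, t k` of an enumeration as in the characterisation of free sets;
the chain condition on levels is left out, as it follows (`IsFreeEnumeration.length_lt`). -/
def IsFreeEnumeration {β : Type*} (t : ℕ → List β) (a k : ℕ) : Prop :=
  t (k - 1) ≠ t k ∧ (t (k - 1)).length ≤ (t k).length ∧
    ∀ m, a ≤ m → m + 2 ≤ k → (t m).length < (infNode (t '' Set.Icc (m + 1) k)).length

namespace IsFreeEnumeration

variable {β : Type*} {t s : ℕ → List β} {a k : ℕ}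

lemma pair (hne : t a ≠ t (a + 1)) (hle : (t a).length ≤ (t (a + 1)).length) :
    IsFreeEnumeration t a (a + 1) :=
  ⟨hne, hle, fun _ _ _ => by omega⟩

lemma of_succ (h : IsFreeEnumeration t (a + 1) k)
    (ha : (t a).length < (infNode (t '' Set.Icc (a + 1) k)).length) :
    IsFreeEnumeration t a k :=
  ⟨h.1, h.2.1, fun m ham hmk =>
    (eq_or_lt_of_le ham).elim (fun hm => hm ▸ ha) (fun hm => h.2.2 m hm hmk)⟩

lemma succ (h : IsFreeEnumeration t a k) : IsFreeEnumeration t (a + 1) k :=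
  ⟨h.1, h.2.1, fun m ham => h.2.2 m (by omega)⟩

lemma congr (h : IsFreeEnumeration t a k) (hak : a < k) (hst : Set.EqOn s t (Set.Icc a k)) :
    IsFreeEnumeration s a k := by
  obtain ⟨hne, hle, hinf⟩ := h
  have hk₁ : s (k - 1) = t (k - 1) := hst ⟨by omega, by omega⟩
  have hk : s k = t k := hst ⟨by omega, le_rfl⟩
  refine ⟨hk₁ ▸ hk ▸ hne, hk₁ ▸ hk ▸ hle, fun m ham hmk => ?_⟩
  rw [hst ⟨ham, by omega⟩, (hst.mono (Set.Icc_subset_Icc (by omega) le_rfl)).image_eq]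
  exact hinf m ham hmk

lemma length_lt (h : IsFreeEnumeration t a k) {i j : ℕ} (hai : a ≤ i) (hij : i < j)
    (hjk : j ≤ k - 1) : (t i).length < (t j).length :=
  (h.2.2 i hai (by omega)).trans_le (length_infNode_le ⟨j, ⟨hij, by omega⟩, rfl⟩)

lemma injOn (h : IsFreeEnumeration t a k) : Set.InjOn t (Set.Icc a k) := by
  have hne : ∀ i ∈ Set.Icc a k, ∀ j ∈ Set.Icc a k, i < j → t i ≠ t j := by
    rintro i ⟨hai, -⟩ j ⟨-, hjk⟩ hij
    by_cases hi : i + 2 ≤ k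
    · exact fun hteq =>
        (h.2.2 i hai hi).not_ge (hteq ▸ length_infNode_le ⟨j, ⟨hij, hjk⟩, rfl⟩)
    · rw [show i = k - 1 by omega, show j = k by omega]
      exact h.1
  intro i hi j hj hij
  by_contra hij'
  rcases Nat.lt_or_gt_of_ne hij' with hlt | hlt
  exacts [hne i hi j hj hlt hij, hne j hj i hi hlt hij.symm]

end IsFreeEnumeration

section Free

variable {b : ℕ} {T : Set (List (Fin b))}

lemma FreeK.card_eq {n : ℕ} {F : Finset (List (Fin b))} (h : FreeK T n F) : F.card = n := by
  induction h with
  | single => simp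
  | pair s t _ _ hst => rw [Finset.card_pair hst]
  | step k _ t _ G _ hlen ih =>
    have htG : t ∉ G := fun htG => hlen.not_ge (length_infNode_le (Finset.mem_coe.2 htG))
    rw [Finset.card_insert_of_notMem htG, ih]

theorem FreeK.exists_isFreeEnumeration {n : ℕ} {F : Finset (List (Fin b))} (hF : FreeK T n F)
    (hn : 2 ≤ n) {a k : ℕ} (hk : a + n = k + 1) :
    ∃ t : ℕ → List (Fin b), t '' Set.Icc a k = F ∧ IsFreeEnumeration t a k := by
  induction hF generalizing a k with
  | single => omega
  | pair x y hx hy hxy =>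
    wlog hle : x.length ≤ y.length generalizing x y
    · simpa only [Finset.pair_comm] using this y x hy hx hxy.symm (by omega)
    obtain rfl : k = a + 1 := by omega
    refine ⟨fun i => if i = a then x else y, ?_, IsFreeEnumeration.pair ?_ ?_⟩
    · rw [← Set.insert_Icc_add_one_left_eq_Icc (by omega), Set.Icc_self, Set.image_insert_eq,
        Set.image_singleton]
      simp
    · simpa using hxy
    · simpa using hle
  | step n hn₂ x _ G _ hx ih =>
    obtain ⟨s, hsG, hs⟩ := ih hn₂ (a := a + 1) (k := k) (by omega)
    set t := Function.update s a x
    have hst : Set.EqOn t s (Set.Icc (a + 1) k) := fun i hi =>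
      Function.update_of_ne (by grind) _ _
    have htG : t '' Set.Icc (a + 1) k = G := hst.image_eq.trans hsG
    refine ⟨t, ?_, (hs.congr (by omega) hst).of_succ ?_⟩
    · rw [← Set.insert_Icc_add_one_left_eq_Icc (by omega), Set.image_insert_eq, htG]
      simp [t]
    · rw [htG]
      simpa [t] using hx

theorem IsFreeEnumeration.freeK {t : ℕ → List (Fin b)} {a k n : ℕ}
    (h : IsFreeEnumeration t a k) (hT : ∀ i ∈ Set.Icc a k, t i ∈ T) (hn : 2 ≤ n)
    (hk : a + n = k + 1) :
    FreeK T n ((Finset.Icc a k).image t) := by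
  induction n, hn using Nat.le_induction generalizing a with
  | base =>
    obtain rfl : k = a + 1 := by omega
    rw [← Finset.insert_Icc_add_one_left_eq_Icc (by omega), Finset.Icc_self, Finset.image_insert,
      Finset.image_singleton]
    exact FreeK.pair _ _ (hT a ⟨le_rfl, by omega⟩) (hT (a + 1) ⟨by omega, le_rfl⟩) h.1
  | succ n hn ih =>
    have hG := ih h.succ (fun i hi => hT i ⟨by grind, hi.2⟩) (by omega)
    rw [← Finset.insert_Icc_add_one_left_eq_Icc (by omega), Finset.image_insert]
    refine FreeK.step n hn (t a) (hT a ⟨le_rfl, by omega⟩) _ hG ?_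
    rw [Finset.coe_image, Finset.coe_Icc]
    exact h.2.2 a le_rfl (by omega)

end Free

theorem stmt14_general (b k : ℕ) (hk : 3 ≤ k)
    (T : Set (List (Fin b)))
    (F : Finset (List (Fin b))) (hFT : ↑F ⊆ T) (hcard : F.card = k) :
    IsFreeSet T F ↔
      ∃ t : ℕ → List (Fin b),
        (∀ i, 1 ≤ i → i ≤ k → t i ∈ F) ∧
        (↑F : Set (List (Fin b))) ⊆ t '' Set.Icc 1 k ∧
        Set.InjOn t (Set.Icc 1 k) ∧
        (∀ i j, 1 ≤ i → i < j → j ≤ k - 1 → (t i).length < (t j).length) ∧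
        (t (k - 1)).length ≤ (t k).length ∧
        (∀ m, 1 ≤ m → m ≤ k - 2 →
          (t m).length < (infNode (t '' Set.Icc (m + 1) k)).length) := by
  constructor
  · rintro ⟨n, hF⟩
    rw [hF.card_eq.symm.trans hcard] at hF
    obtain ⟨t, htF, ht⟩ := hF.exists_isFreeEnumeration (a := 1) (k := k) (by omega) (by omega)
    refine ⟨t, fun i h₁ h₂ => ?_, htF.symm.subset, ht.injOn,
      fun i j hi hij hj => ht.length_lt hi hij hj, ht.2.1, fun m hm hmk => ht.2.2 m hm (by omega)⟩
    rw [← Finset.mem_coe, ← htF]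
    exact ⟨i, ⟨h₁, h₂⟩, rfl⟩
  · rintro ⟨t, hmem, hsub, hinj, -, hle, hinf⟩
    have ht : IsFreeEnumeration t 1 k :=
      ⟨fun h => absurd (hinj ⟨by omega, by omega⟩ ⟨by omega, le_rfl⟩ h) (by omega), hle,
        fun m hm hmk => hinf m hm (by omega)⟩
    have htF : (Finset.Icc 1 k).image t = F := Finset.coe_injective <| by
      rw [Finset.coe_image, Finset.coe_Icc]
      refine Set.Subset.antisymm ?_ hsub
      rintro _ ⟨i, hi, rfl⟩
      exact hmem i hi.1 hi.2
    exact ⟨k, htF ▸ ht.freeK (fun i hi => hFT (hmem i hi.1 hi.2)) (by omega) (by omega)⟩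

theorem stmt14 (b k : ℕ) (hb : 2 ≤ b) (hk : 3 ≤ k)
    (T : Set (List (Fin b))) (hT : IsStrongSubtreeInf Set.univ T)
    (F : Finset (List (Fin b))) (hFT : ↑F ⊆ T) (hcard : F.card = k) :
    IsFreeSet T F ↔
      ∃ t : ℕ → List (Fin b),
        (∀ i, 1 ≤ i → i ≤ k → t i ∈ F) ∧
        (↑F : Set (List (Fin b))) ⊆ t '' Set.Icc 1 k ∧
        Set.InjOn t (Set.Icc 1 k) ∧
        (∀ i j, 1 ≤ i → i < j → j ≤ k - 1 → (t i).length < (t j).length) ∧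
        (t (k - 1)).length ≤ (t k).length ∧
        (∀ m, 1 ≤ m → m ≤ k - 2 →
          (t m).length < (infNode (t '' Set.Icc (m + 1) k)).length) :=
  stmt14_general b k hk T F hFT hcard
end
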